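/- arXiv:2605.09917 — 6 statements merged into one kernel-verified Lean document; each statement's English description precedes it below -/
import Mathlib

section
/- Let R be a commutative ring, A an n×n matrix over R, B an m×m matrix over R with m ≥ n, and let H be the (n+m)×(n+m) block matrix H = [[A, X],[Y, B]] where X is the n×m matrix with X_{ii} = x_i for i ∈ [n] and zeros elsewhere, and Y is the m×n matrix with Y_{ii} = y_i for i ∈ [n] and zeros elsewhere. Then det(H) = Σ_{S,T ⊆ [n], |S|=|T|} (-1)^{|S|} · det(A_{-S,-T}) · det(B_{-T,-S}) · x^S · y^T, where A_{-S,-T} denotes A with rows in S and columns in T deleted, and x^S = Π_{i∈S} x_i, y^T = Π_{j∈T} y_j. -/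
/-!
Write `H = diag(A, B) + diag(x, y) * P`, where `P` is the symmetric 0/1 matrix pairing the `i`-th
index of the `A` block with the `i`-th index of the `B` block. Multilinearity of the determinant
in the rows expands `det H` as a sum over the sets `S`, `T ⊆ [n]` of rows in which the `P`-part
is taken, with weight `x^S y^T`; in the resulting matrix these rows are unit vectors pointing
into the other block. Counting the rows supported in one block kills every term with
`|S| ≠ |T|`. When `|S| = |T|`, a permutation of `[n]` mapping `S` onto `T` and `Sᶜ` monotonically
onto `Tᶜ`, applied to the columns of the `A` block and to the first `n` rows of the `B` block
(two permutations of equal sign), reduces the term to the case `S = T`. There the matrix is block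
triangular, with diagonal blocks `A_{-S,-S}`, `B_{-S,-S}` and `[[0, 1], [1, 0]]`, the last
contributing the sign `(-1)^|S|`.
-/

open Matrix Finset

namespace Matrix

variable {ι R : Type*} [Fintype ι] [DecidableEq ι] [CommRing R]

theorem det_add_diagonal_mul (D E : Matrix ι ι R) (v : ι → R) :
    det (D + diagonal v * E) =
      ∑ s : Finset ι, (∏ i ∈ s, v i) * det (of fun i j => if i ∈ s then E i j else D i j) := by
  rw [add_comm]
  refine (detRowAlternating.map_add_univ (diagonal v * E) D).trans
    (sum_congr rfl fun s _ => ?_)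
  set N : Matrix ι ι R := of fun i j => if i ∈ s then E i j else D i j
  calc detRowAlternating (s.piecewise (diagonal v * E) D)
      = det (of fun i j => s.piecewise v 1 i * N i j) := by
        change det _ = det _
        congr 1
        ext i j
        by_cases hi : i ∈ s <;> simp [N, Finset.piecewise, hi, diagonal_mul]
    _ = (∏ i ∈ s, v i) * det N := by rw [det_mul_column, prod_piecewise]; simp

theorem det_eq_zero_of_card_lt {I J : Finset ι} (hcard : #J < #I) {M : Matrix ι ι R}
    (hM : ∀ i ∈ I, ∀ j ∉ J, M i j = 0) : M.det = 0 := by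
  rw [← det_transpose, det_apply]
  refine sum_eq_zero fun σ _ => ?_
  obtain ⟨i, hi, hσi⟩ : ∃ i ∈ I, σ i ∉ J := by
    by_contra! h
    exact hcard.not_ge (card_le_card_of_injOn σ h σ.injective.injOn)
  rw [prod_eq_zero (mem_univ i) (by simpa using hM i hi _ hσi), smul_zero]

theorem det_fromBlocks_zero_one_one_zero (κ : Type*) [Fintype κ] [DecidableEq κ] :
    det (fromBlocks 0 1 1 0 : Matrix (κ ⊕ κ) (κ ⊕ κ) R) = (-1) ^ Fintype.card κ := by
  -- `[[0, 1], [1, 0]] * [[1, 0], [1, 1]] = [[1, 1], [1, 0]]`, whose Schur complement is `-1`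
  have h := congrArg det (fromBlocks_multiply (0 : Matrix κ κ R) (1 : Matrix κ κ R)
    (1 : Matrix κ κ R) (0 : Matrix κ κ R) (1 : Matrix κ κ R) (0 : Matrix κ κ R)
    (1 : Matrix κ κ R) (1 : Matrix κ κ R))
  rw [det_mul, det_fromBlocks_zero₁₂, det_one, mul_one, mul_one] at h
  simpa [det_neg] using h

theorem det_toSquareBlockProp_compl {α : Type*} [Fintype α] [LinearOrder α]
    (M : Matrix α α R) (S : Finset α) {l : ℕ} (hS : #Sᶜ = l) :
    det (M.toSquareBlockProp (· ∉ S)) =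
      det (M.submatrix (Sᶜ.orderEmbOfFin hS) (Sᶜ.orderEmbOfFin hS)) := by
  rw [← det_submatrix_equiv_self
    ((Sᶜ.orderIsoOfFin hS).toEquiv.trans (Equiv.subtypeEquivRight fun _ => mem_compl))]
  rfl

end Matrix

theorem Finset.exists_perm_mem_iff_orderEmbOfFin_compl {α : Type*} [Fintype α] [LinearOrder α]
    {S T : Finset α} {l : ℕ} (hS : #Sᶜ = l) (hT : #Tᶜ = l) :
    ∃ π : Equiv.Perm α, (∀ a, π a ∈ T ↔ a ∈ S) ∧
      ∀ i, π (Sᶜ.orderEmbOfFin hS i) = Tᶜ.orderEmbOfFin hT i := by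
  have hST : #T = #S := by
    have := card_add_card_compl S
    have := card_add_card_compl T
    omega
  let eS := finSumEquivOfFinset rfl hS
  refine ⟨eS.symm.trans (finSumEquivOfFinset hST hT), fun a => ?_, fun i => ?_⟩
  · obtain ⟨i | i, rfl⟩ := eS.surjective a <;>
      rw [Equiv.trans_apply, Equiv.symm_apply_apply]
    · simp [eS, orderEmbOfFin_mem]
    · have hS' := orderEmbOfFin_mem Sᶜ hS i
      have hT' := orderEmbOfFin_mem Tᶜ hT i
      simp only [mem_compl] at hS' hT'
      simp [eS, hS', hT']
  · rw [Equiv.trans_apply, ← finSumEquivOfFinset_inr rfl hS, Equiv.symm_apply_apply,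
      finSumEquivOfFinset_inr]

namespace Equiv.Perm

theorem viaFintypeEmbedding_mem_map_iff {α β : Type*} [Fintype α] [DecidableEq β] (g : α ↪ β)
    {S T : Finset α} {π : Perm α} (hπ : ∀ a, π a ∈ T ↔ a ∈ S) (b : β) :
    π.viaFintypeEmbedding g b ∈ T.map g ↔ b ∈ S.map g := by
  by_cases hb : b ∈ Set.range g
  · obtain ⟨a, rfl⟩ := hb
    simp [hπ]
  · rw [π.viaFintypeEmbedding_apply_notMem_range g hb]
    simp only [mem_map]
    exact ⟨fun ⟨a, _, h⟩ => (hb ⟨a, h⟩).elim, fun ⟨a, _, h⟩ => (hb ⟨a, h⟩).elim⟩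

variable {n m : ℕ} (hnm : n ≤ m)

theorem strictMonoOn_viaFintypeEmbedding_castLE {S : Finset (Fin n)} {π : Perm (Fin n)}
    (hπ : StrictMonoOn π ↑Sᶜ) :
    StrictMonoOn (π.viaFintypeEmbedding (Fin.castLEEmb hnm)) ↑(S.map (Fin.castLEEmb hnm))ᶜ := by
  have hrange : ∀ v : Fin m, v ∉ Set.range (Fin.castLEEmb hnm) → n ≤ v := fun v hv => by
    by_contra! h
    exact hv ⟨⟨v, h⟩, rfl⟩
  intro u hu v hv huv
  by_cases hv' : v ∈ Set.range (Fin.castLEEmb hnm)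
  · obtain ⟨v, rfl⟩ := hv'
    obtain ⟨u, rfl⟩ : u ∈ Set.range (Fin.castLEEmb hnm) := ⟨⟨u, lt_trans huv v.2⟩, rfl⟩
    simp only [coe_compl, Set.mem_compl_iff, mem_coe, mem_map'] at hu hv
    rw [viaFintypeEmbedding_apply_image, viaFintypeEmbedding_apply_image]
    exact hπ (by simpa using hu) (by simpa using hv) huv
  · rw [π.viaFintypeEmbedding_apply_notMem_range _ hv']
    by_cases hu' : u ∈ Set.range (Fin.castLEEmb hnm)
    · obtain ⟨u, rfl⟩ := hu'
      rw [viaFintypeEmbedding_apply_image]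
      exact Fin.lt_def.2 (lt_of_lt_of_le (π u).2 (hrange v hv'))
    · rwa [π.viaFintypeEmbedding_apply_notMem_range _ hu']

theorem viaFintypeEmbedding_castLE_orderEmbOfFin_compl {l l' : ℕ} {S T : Finset (Fin n)}
    {π : Perm (Fin n)} (hπT : ∀ a, π a ∈ T ↔ a ∈ S) (hS : #Sᶜ = l) (hT : #Tᶜ = l)
    (hπ : ∀ i, π (Sᶜ.orderEmbOfFin hS i) = Tᶜ.orderEmbOfFin hT i)
    (hS' : #(S.map (Fin.castLEEmb hnm))ᶜ = l') (hT' : #(T.map (Fin.castLEEmb hnm))ᶜ = l')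
    (i : Fin l') :
    π.viaFintypeEmbedding (Fin.castLEEmb hnm) ((S.map (Fin.castLEEmb hnm))ᶜ.orderEmbOfFin hS' i) =
      (T.map (Fin.castLEEmb hnm))ᶜ.orderEmbOfFin hT' i := by
  have hmono : StrictMonoOn π ↑Sᶜ := by
    rw [← range_orderEmbOfFin Sᶜ hS]
    rintro _ ⟨i, rfl⟩ _ ⟨j, rfl⟩ hij
    rw [hπ, hπ]
    exact (orderEmbOfFin _ hT).strictMono ((orderEmbOfFin _ hS).lt_iff_lt.1 hij)
  have hmem : ∀ i, π.viaFintypeEmbedding (Fin.castLEEmb hnm)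
      ((S.map (Fin.castLEEmb hnm))ᶜ.orderEmbOfFin hS' i) ∈ (T.map (Fin.castLEEmb hnm))ᶜ := by
    intro i
    have := orderEmbOfFin_mem _ hS' i
    rw [mem_compl] at this ⊢
    rwa [viaFintypeEmbedding_mem_map_iff _ hπT]
  refine congrFun (orderEmbOfFin_unique hT' hmem fun i j hij => ?_) i
  exact strictMonoOn_viaFintypeEmbedding_castLE hnm hmono (orderEmbOfFin_mem _ hS' i)
    (orderEmbOfFin_mem _ hS' j) ((orderEmbOfFin _ hS').strictMono hij)

end Equiv.Perm

namespace Matrix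

variable {R α β : Type*} [CommRing R] [Fintype α] [Fintype β] [DecidableEq α] [DecidableEq β]
  (g : α ↪ β)

def pairingMatrix : Matrix (α ⊕ β) (α ⊕ β) R :=
  fromBlocks 0 (of fun a b => if g a = b then 1 else 0) (of fun b a => if g a = b then 1 else 0) 0

def diagWithPairingRows (A : Matrix α α R) (B : Matrix β β R) (S T : Finset α) :
    Matrix (α ⊕ β) (α ⊕ β) R :=
  of fun p q => if p ∈ S.disjSum (T.map g) then pairingMatrix g p q else fromBlocks A 0 0 B p q

variable {g}

theorem fromBlocks_eq_add_diagonal_mul_pairingMatrix (A : Matrix α α R) (B : Matrix β β R)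
    (x y : α → R) :
    fromBlocks A (of fun a b => if g a = b then x a else 0)
      (of fun b a => if g a = b then y a else 0) B =
      fromBlocks A 0 0 B + diagonal (Sum.elim x (Function.extend g y 0)) * pairingMatrix g := by
  ext (a | b) (c | d)
  · simp [pairingMatrix]
  · simp [pairingMatrix]
  · by_cases h : g c = b
    · subst h
      simp [pairingMatrix, g.injective.extend_apply]
    · simp [pairingMatrix, h]
  · simp [pairingMatrix]

theorem det_fromBlocks_eq_sum_diagWithPairingRows (A : Matrix α α R) (B : Matrix β β R)
    (x y : α → R) :
    det (fromBlocks A (of fun a b => if g a = b then x a else 0)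
      (of fun b a => if g a = b then y a else 0) B) =
      ∑ S : Finset α, ∑ T : Finset α,
        (∏ a ∈ S, x a) * (∏ a ∈ T, y a) * det (diagWithPairingRows g A B S T) := by
  rw [fromBlocks_eq_add_diagonal_mul_pairingMatrix, det_add_diagonal_mul,
    ← Finset.sumEquiv.symm.toEquiv.sum_comp, Fintype.sum_prod_type]
  simp only [OrderIso.coe_toEquiv, sumEquiv_symm_apply]
  refine sum_congr rfl fun S _ => ?_
  symm
  refine Fintype.sum_of_injective (fun T => T.map g) (Finset.map_injective g) _ _ ?_ ?_
  · intro U hU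
    obtain ⟨b, hbU, hb⟩ : ∃ b ∈ U, b ∉ Set.range g := by
      by_contra! h
      obtain ⟨T, -, rfl⟩ :=
        subset_map_iff.1 fun b hb => (by simpa using h b hb : b ∈ univ.map g)
      exact hU ⟨T, rfl⟩
    rw [prod_disjSum, prod_eq_zero (s := U) hbU
      (by simp [Function.extend_apply' _ _ _ (by simpa using hb)])]
    simp
  · intro T
    simp [prod_disjSum, g.injective.extend_apply, diagWithPairingRows]
    rfl

theorem det_diagWithPairingRows_of_card_ne (A : Matrix α α R) (B : Matrix β β R)
    {S T : Finset α} (hST : #S ≠ #T) : det (diagWithPairingRows g A B S T) = 0 := by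
  have hS := card_le_univ S
  have hT := card_le_univ (T.map g)
  rw [card_map] at hT
  rcases hST.lt_or_gt with h | h
  · refine det_eq_zero_of_card_lt (I := Sᶜ.disjSum (T.map g)) (J := univ.disjSum ∅) ?_ ?_
    · simp only [card_disjSum, card_compl, card_map, card_univ, card_empty]
      omega
    · rintro (a | b) hp (c | d) hq <;> simp_all [diagWithPairingRows, pairingMatrix]
  · refine det_eq_zero_of_card_lt (I := S.disjSum (T.map g)ᶜ) (J := (∅ : Finset α).disjSum univ)
      ?_ ?_
    · simp only [card_disjSum, card_compl, card_map, card_univ, card_empty]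
      omega
    · rintro (a | b) hp (c | d) hq <;> simp_all [diagWithPairingRows, pairingMatrix]

theorem det_diagWithPairingRows_eq_of_perm (A : Matrix α α R) (B : Matrix β β R)
    {S T : Finset α} (π : Equiv.Perm α) (hπ : ∀ a, π a ∈ T ↔ a ∈ S) :
    det (diagWithPairingRows g A B S T) = det (diagWithPairingRows g (A.submatrix id π)
      (B.submatrix (π.viaFintypeEmbedding g) id) S S) := by
  set π' := π.viaFintypeEmbedding g
  have hg : ∀ a, π' (g a) = g (π a) := π.viaFintypeEmbedding_apply_image g
  have hπ' : ∀ b, π' b ∈ T.map g ↔ b ∈ S.map g := π.viaFintypeEmbedding_mem_map_iff g hπ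
  set M := diagWithPairingRows g A B S T
  have hsub : (M.submatrix (Equiv.sumCongr (Equiv.refl α) π') id).submatrix id
      (Equiv.sumCongr π (Equiv.refl β)) =
      diagWithPairingRows g (A.submatrix id π) (B.submatrix π' id) S S := by
    ext (a | b) (c | d)
    · simp [M, diagWithPairingRows, pairingMatrix]
    · simp [M, diagWithPairingRows, pairingMatrix]
    · simp [M, diagWithPairingRows, pairingMatrix, hπ', ← hg, π'.injective.eq_iff]
    · simp [M, diagWithPairingRows, pairingMatrix, hπ']
  have hsign : Equiv.Perm.sign π' = Equiv.Perm.sign π := Equiv.Perm.sign_extendDomain _ _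
  rw [← hsub, det_permute', det_permute, Equiv.Perm.sign_sumCongr, Equiv.Perm.sign_sumCongr,
    hsign]
  simp [← mul_assoc, ← Units.val_mul, ← Int.cast_mul]

theorem det_diagWithPairingRows_self (A : Matrix α α R) (B : Matrix β β R) (S : Finset α) :
    det (diagWithPairingRows g A B S S) = (-1) ^ #S * det (A.toSquareBlockProp (· ∉ S)) *
      det (B.toSquareBlockProp (· ∉ S.map g)) := by
  set M := diagWithPairingRows g A B S S
  let p : α ⊕ β → Prop := Sum.elim (· ∈ S) (· ∈ S.map g)
  let _ : DecidablePred p := fun c => by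
    cases c <;> dsimp only [p, Sum.elim_inl, Sum.elim_inr] <;> infer_instance
  let ePairs : S ⊕ S ≃ {c // p c} :=
    (Equiv.sumCongr (Equiv.refl _) (S.equivMap g)).trans (Equiv.subtypeSum (p := p)).symm
  let eRest : {a // a ∉ S} ⊕ {b // b ∉ S.map g} ≃ {c // ¬p c} :=
    (Equiv.sumCongr (Equiv.subtypeEquivRight fun _ => Iff.rfl)
      (Equiv.subtypeEquivRight fun _ => Iff.rfl)).trans (Equiv.subtypeSum (p := (¬p ·))).symm
  have hPairs : (M.toSquareBlockProp p).submatrix ePairs ePairs = fromBlocks 0 1 1 0 := by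
    have hl : ∀ a, (ePairs (.inl a) : α ⊕ β) = .inl ↑a := fun _ => rfl
    have hr : ∀ a, (ePairs (.inr a) : α ⊕ β) = .inr (g a) := fun _ => rfl
    ext (a | a) (b | b) <;>
      simp [toSquareBlockProp_def, hl, hr, M, diagWithPairingRows, pairingMatrix, one_apply]
    all_goals simp only [eq_comm]
  have hRest : (M.toSquareBlockProp (¬p ·)).submatrix eRest eRest =
      fromBlocks (A.toSquareBlockProp (· ∉ S)) 0 0 (B.toSquareBlockProp (· ∉ S.map g)) := by
    ext (a | a) (b | b) <;>
      simp [eRest, M, diagWithPairingRows, p, toSquareBlockProp_def, Equiv.subtypeSum, a.2]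
  have hTriangular : ∀ i, p i → ∀ j, ¬p j → M i j = 0 := by
    rintro (a | b) ha (c | d) hc <;> simp_all [M, diagWithPairingRows, pairingMatrix, p]
    obtain ⟨a, haS, rfl⟩ := ha
    exact fun hca => (hc (g.injective hca ▸ haS)).elim
  rw [twoBlockTriangular_det' M p hTriangular, mul_assoc, ← det_submatrix_equiv_self ePairs,
    hPairs, det_fromBlocks_zero_one_one_zero, Fintype.card_coe,
    ← det_submatrix_equiv_self eRest, hRest, det_fromBlocks_zero₂₁]

theorem det_diagWithPairingRows_castLE {n m : ℕ} (hnm : n ≤ m) (A : Matrix (Fin n) (Fin n) R)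
    (B : Matrix (Fin m) (Fin m) R) {S T : Finset (Fin n)} {l l' : ℕ} (hS : #Sᶜ = l)
    (hT : #Tᶜ = l) (hS' : #(S.map (Fin.castLEEmb hnm))ᶜ = l')
    (hT' : #(T.map (Fin.castLEEmb hnm))ᶜ = l') :
    det (diagWithPairingRows (Fin.castLEEmb hnm) A B S T) =
      (-1) ^ #S * det (A.submatrix (Sᶜ.orderEmbOfFin hS) (Tᶜ.orderEmbOfFin hT)) *
        det (B.submatrix ((T.map (Fin.castLEEmb hnm))ᶜ.orderEmbOfFin hT')
          ((S.map (Fin.castLEEmb hnm))ᶜ.orderEmbOfFin hS')) := by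
  obtain ⟨π, hπT, hπ⟩ := exists_perm_mem_iff_orderEmbOfFin_compl hS hT
  have hA : (A.submatrix id π).submatrix (Sᶜ.orderEmbOfFin hS) (Sᶜ.orderEmbOfFin hS) =
      A.submatrix (Sᶜ.orderEmbOfFin hS) (Tᶜ.orderEmbOfFin hT) := by
    ext i j
    simp [hπ]
  have hB : (B.submatrix (π.viaFintypeEmbedding (Fin.castLEEmb hnm)) id).submatrix
      ((S.map (Fin.castLEEmb hnm))ᶜ.orderEmbOfFin hS')
      ((S.map (Fin.castLEEmb hnm))ᶜ.orderEmbOfFin hS') =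
      B.submatrix ((T.map (Fin.castLEEmb hnm))ᶜ.orderEmbOfFin hT')
        ((S.map (Fin.castLEEmb hnm))ᶜ.orderEmbOfFin hS') := by
    ext i j
    simp [Equiv.Perm.viaFintypeEmbedding_castLE_orderEmbOfFin_compl hnm hπT hS hT hπ hS' hT']
  rw [det_diagWithPairingRows_eq_of_perm _ _ π hπT, det_diagWithPairingRows_self,
    det_toSquareBlockProp_compl _ _ hS, det_toSquareBlockProp_compl _ _ hS', hA, hB, mul_assoc]

end Matrix

/-- **Block matrix determinant expansion.** For `A` an `n×n` matrix, `B` an `m×m` matrix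
(`n ≤ m`) over a commutative ring, and `H = [[A, X], [Y, B]]` where `X` (resp. `Y`) has the
entries `x i` (resp. `y i`) on its main diagonal and zeros elsewhere,
`det H = Σ_{S,T ⊆ [n], |S|=|T|} (-1)^{|S|} det(A_{-S,-T}) det(B_{-T,-S}) x^S y^T`,
where `A_{-S,-T}` deletes rows `S` and columns `T` and `B_{-T,-S}` deletes rows `T` and
columns `S` (as subsets of the first `n` indices of `B`). -/
theorem block_det_expansion {R : Type*} [CommRing R] {n m : ℕ} (hnm : n ≤ m)
    (A : Matrix (Fin n) (Fin n) R) (B : Matrix (Fin m) (Fin m) R)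
    (x y : Fin n → R) :
    (Matrix.fromBlocks A
        (Matrix.of fun (i : Fin n) (j : Fin m) => if (i : ℕ) = (j : ℕ) then x i else 0)
        (Matrix.of fun (j : Fin m) (i : Fin n) => if (i : ℕ) = (j : ℕ) then y i else 0)
        B).det =
      ∑ S : Finset (Fin n), ∑ T : Finset (Fin n),
        if hST : S.card = T.card then
          (-1 : R) ^ S.card *
            (A.submatrix
              (fun a : Fin (n - S.card) =>
                ((Sᶜ.orderIsoOfFin (by simp [Finset.card_compl])) a : Fin n))
              (fun a : Fin (n - S.card) =>
                ((Tᶜ.orderIsoOfFin (by simp [Finset.card_compl, hST])) a : Fin n))).det *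
            (B.submatrix
              (fun a : Fin (m - T.card) =>
                (((T.map (Fin.castLEEmb hnm))ᶜ.orderIsoOfFin
                  (by simp [Finset.card_compl, Fin.castLEEmb])) a : Fin m))
              (fun a : Fin (m - T.card) =>
                (((S.map (Fin.castLEEmb hnm))ᶜ.orderIsoOfFin
                  (by simp [Finset.card_compl, hST])) a : Fin m))).det *
            (∏ i ∈ S, x i) * (∏ j ∈ T, y j)
        else 0 := by
  
  have hX : (of fun (i : Fin n) (j : Fin m) => if (i : ℕ) = (j : ℕ) then x i else 0) =
      of fun a b => if Fin.castLEEmb hnm a = b then x a else 0 := by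
    ext i j
    simp [Fin.ext_iff]
  have hY : (of fun (j : Fin m) (i : Fin n) => if (i : ℕ) = (j : ℕ) then y i else 0) =
      of fun b a => if Fin.castLEEmb hnm a = b then y a else 0 := by
    ext i j
    simp [Fin.ext_iff]
  rw [hX, hY, det_fromBlocks_eq_sum_diagWithPairingRows]
  refine sum_congr rfl fun S _ => sum_congr rfl fun T _ => ?_
  split_ifs with hST
  · rw [det_diagWithPairingRows_castLE hnm A B (l := n - #S) (l' := m - #T)
      (by simp [card_compl]) (by simp [card_compl, hST]) (by simp [card_compl, hST])
      (by simp [card_compl])]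
    simp only [coe_orderIsoOfFin_apply]
    ring
  · rw [det_diagWithPairingRows_of_card_ne _ _ hST, mul_zero]
end

section
/- Let F be a field, f ∈ F[x_1,...,x_n] a nonzero polynomial of total degree at most d, and let r_1,...,r_n be independent uniformly random elements of a finite subset (or of the finite field) F. Then the probability that f(r_1,...,r_n) = 0 is at most d/|F|. -/
open MvPolynomial

/-- **Schwartz–Zippel lemma.** If `f` is a nonzero polynomial over a finite field `F` in `n`
variables of total degree at most `d`, and `r : Fin n → F` is chosen uniformly at random,
then the probability that `f(r) = 0` is at most `d / |F|`. -/
theorem schwartz_zippel {F : Type*} [Field F] [Fintype F] [DecidableEq F]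
    {n d : ℕ} (f : MvPolynomial (Fin n) F) (hf : f ≠ 0) (hdeg : f.totalDegree ≤ d) :
    ((Finset.univ.filter fun r : Fin n → F => eval r f = 0).card : ℚ) /
        (Fintype.card (Fin n → F) : ℚ) ≤ (d : ℚ) / (Fintype.card F : ℚ) := by
  have h := schwartz_zippel_totalDegree hf Finset.univ
  rw [Fintype.piFinset_univ, Finset.card_univ] at h
  calc _ = ((_ / (Fintype.card F ^ n : ℚ≥0) : ℚ≥0) : ℚ) := by simp
    _ ≤ ((f.totalDegree / Fintype.card F : ℚ≥0) : ℚ) := NNRat.coe_le_coe.mpr h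
    _ ≤ (d : ℚ) / (Fintype.card F : ℚ) := by push_cast; gcongr
end

section
/- Let A ∈ F^{m×n} be a matrix over a field F, and let I ⊆ [m], J ⊆ [n]. Then A_{I,J} is a nonsingular submatrix with |I| = |J| = rank(A) if and only if the rows of A indexed by I form a basis of the row space of A and the columns of A indexed by J form a basis of the column space of A. -/
/-!
Write `A_{I,·}` for the rows of `A` indexed by `I`. These rows form a row basis exactly when
`rank A_{I,·} = |I| = rank A`. If `A_{I,J}` is nonsingular of size `rank A`, then
`|I| = rank A_{I,J} ≤ rank A_{I,·} ≤ |I|` forces this, and likewise for the columns.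
Conversely, if the rows in `I` span the row space, deleting the other rows does not change the
rank of any column selection, so `rank A_{I,J} = rank A_{·,J} = |J| = rank A` when the columns
in `J` are independent.
-/

open Module Submodule

namespace Matrix

variable {F m n m₀ n₀ : Type*} [Field F]

def IsRowBasis (A : Matrix m n F) (I : Finset m) : Prop :=
  LinearIndependent F (fun i : I => A i) ∧ span F (A '' I) = span F (Set.range A)

theorem linearIndependent_row_iff_rank_eq_card [Fintype m] [Fintype n] (M : Matrix m n F) :
    LinearIndependent F M.row ↔ M.rank = Fintype.card m := by
  rw [M.rank_eq_finrank_span_row, linearIndependent_iff_card_eq_finrank_span, Set.finrank, eq_comm]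

theorem span_row_submatrix_eq_iff_rank_eq [Finite m] [Fintype n] [Finite m₀]
    (A : Matrix m n F) (r : m₀ → m) :
    span F (Set.range (A.submatrix r id).row) = span F (Set.range A.row) ↔
      (A.submatrix r id).rank = A.rank := by
  rw [rank_eq_finrank_span_row, rank_eq_finrank_span_row]
  exact ⟨fun h => by rw [h],
    eq_of_le_of_finrank_eq (span_mono (Set.range_comp_subset_range r A))⟩

theorem span_row_submatrix_id (M : Matrix m n F) (c : n₀ → n) :
    span F (Set.range (M.submatrix id c).row) =
      (span F (Set.range M.row)).map (LinearMap.funLeft F F c) := by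
  rw [map_span, ← Set.range_comp]
  rfl

theorem rank_submatrix_eq_of_span_row_eq [Fintype n₀] [Finite m₀] [Finite m]
    (A : Matrix m n F) (r : m₀ → m) (c : n₀ → n)
    (h : span F (Set.range (A.submatrix r id).row) = span F (Set.range A.row)) :
    (A.submatrix r c).rank = (A.submatrix id c).rank := by
  change ((A.submatrix r id).submatrix id c).rank = _
  rw [rank_eq_finrank_span_row, rank_eq_finrank_span_row, span_row_submatrix_id,
    span_row_submatrix_id, h]

theorem rank_submatrix_id_eq_card_of_rank_submatrix_eq_card [Fintype m₀] [Fintype n] [Fintype n₀]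
    (A : Matrix m n F) (r : m₀ → m) (c : n₀ → n)
    (h : (A.submatrix r c).rank = Fintype.card m₀) :
    (A.submatrix r id).rank = Fintype.card m₀ :=
  le_antisymm (rank_le_card_height _) (h ▸ rank_submatrix_le (A.submatrix r id) id c)

theorem isRowBasis_iff_rank [Finite m] [Fintype n] (A : Matrix m n F) (I : Finset m) :
    A.IsRowBasis I ↔ (A.submatrix ((↑) : I → m) id).rank = I.card ∧ I.card = A.rank := by
  have hrows : A '' I = Set.range (A.submatrix ((↑) : I → m) id).row := Set.image_eq_range _ _
  change LinearIndependent F (A.submatrix ((↑) : I → m) id).row ∧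
    span F (A '' I) = span F (Set.range A.row) ↔ _
  rw [hrows, span_row_submatrix_eq_iff_rank_eq, linearIndependent_row_iff_rank_eq_card,
    Fintype.card_coe]
  exact ⟨fun ⟨hcard, hrank⟩ => ⟨hcard, hcard.symm.trans hrank⟩,
    fun ⟨hcard, hrank⟩ => ⟨hcard, hcard.trans hrank⟩⟩

end Matrix

open Matrix

/-- `A_{I,J}` is a full-rank (nonsingular) submatrix with `|I| = |J| = rank A` if and only
if the rows indexed by `I` form a basis of the row space of `A` (they are linearly
independent and span the row space) and the columns indexed by `J` form a basis of the
column space of `A`. -/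
theorem nonsingular_submatrix_iff_bases {F : Type*} [Field F] {m n : ℕ}
    (A : Matrix (Fin m) (Fin n) F) (I : Finset (Fin m)) (J : Finset (Fin n)) :
    (I.card = A.rank ∧ J.card = A.rank ∧
      (A.submatrix (fun i : {x // x ∈ I} => (i : Fin m))
        (fun j : {x // x ∈ J} => (j : Fin n))).rank = I.card) ↔
    ((LinearIndependent F fun i : {x // x ∈ I} => A (i : Fin m)) ∧
      Submodule.span F (A '' ↑I) = Submodule.span F (Set.range A) ∧
      (LinearIndependent F fun j : {x // x ∈ J} => Matrix.transpose A (j : Fin n)) ∧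
      Submodule.span F (Matrix.transpose A '' ↑J) =
        Submodule.span F (Set.range (Matrix.transpose A))) := by
  refine Iff.trans ?_ (and_assoc (c := Aᵀ.IsRowBasis J))
  change _ ↔ A.IsRowBasis I ∧ Aᵀ.IsRowBasis J
  rw [isRowBasis_iff_rank, isRowBasis_iff_rank, rank_transpose]
  constructor
  · rintro ⟨hI, hJ, hIJ⟩
    have hrows := rank_submatrix_id_eq_card_of_rank_submatrix_eq_card A _ _
      (hIJ.trans (Fintype.card_coe I).symm)
    have hcols := rank_submatrix_id_eq_card_of_rank_submatrix_eq_card Aᵀ ((↑) : J → Fin n)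
      ((↑) : I → Fin m) (by
        rw [← transpose_submatrix, rank_transpose, hIJ, hI, ← hJ, Fintype.card_coe])
    rw [Fintype.card_coe] at hrows hcols
    exact ⟨⟨hrows, hI⟩, hcols, hJ⟩
  · rintro ⟨⟨hrows, hI⟩, hcols, hJ⟩
    have hspan := (span_row_submatrix_eq_iff_rank_eq A ((↑) : I → Fin m)).mpr (hrows.trans hI)
    refine ⟨hI, hJ, ?_⟩
    calc (A.submatrix ((↑) : I → Fin m) ((↑) : J → Fin n)).rank
        = (A.submatrix id ((↑) : J → Fin n)).rank := rank_submatrix_eq_of_span_row_eq A _ _ hspan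
      _ = (Aᵀ.submatrix ((↑) : J → Fin n) id).rank := by
        rw [← rank_transpose, transpose_submatrix]
      _ = I.card := by rw [hcols, hJ, hI]
end

section
/- Let A be the Tutte matrix of a graph G and I ⊆ V. If the rows of A indexed by I form a row basis, then the principal submatrix A_{I,I} is nonsingular. -/
/-!
If the rows of `A` indexed by `I` span its row space, then `A = D * A_{I,*}` for some `D`, so
`A_{*,I} = D * A_{I,I}` and every kernel vector of `A_{I,I}` is one of `A_{*,I}`. When `A` is
skew-symmetric, the columns indexed by `I` are the negated rows indexed by `I`, which are
independent, so this kernel is trivial.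
-/

/-- The Tutte matrix of a graph `G`, over the field of rational functions in the
indeterminates `x_{uv}`, one for each unordered pair: `A u v = x_{uv}` if `u < v` are
adjacent, `A u v = -x_{uv}` if `v < u` are adjacent, and `0` otherwise. -/
noncomputable def tutteMatrix {V : Type*} [Fintype V] [LinearOrder V]
    (G : SimpleGraph V) [DecidableRel G.Adj] :
    Matrix V V (FractionRing (MvPolynomial (Sym2 V) ℚ)) :=
  Matrix.of fun u v =>
    if G.Adj u v then
      if u < v then
        algebraMap (MvPolynomial (Sym2 V) ℚ) (FractionRing (MvPolynomial (Sym2 V) ℚ))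
          (MvPolynomial.X s(u, v))
      else
        - algebraMap (MvPolynomial (Sym2 V) ℚ) (FractionRing (MvPolynomial (Sym2 V) ℚ))
          (MvPolynomial.X s(u, v))
    else 0

open Set Submodule
open scoped Matrix

namespace Matrix

variable {R l m n ι : Type*} [CommRing R]

theorem exists_mul_eq_of_forall_mem_span_range [Fintype l] (A : Matrix m n R)
    (B : Matrix l n R) (h : ∀ r, A r ∈ span R (range B)) : ∃ D : Matrix m l R, D * B = A := by
  choose D hD using fun r => (range_vecMulLinear B ▸ h r : A r ∈ LinearMap.range B.vecMulLinear)
  exact ⟨D, funext hD⟩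

theorem det_submatrix_ne_zero_of_mem_span_of_linearIndependent [IsDomain R] [Fintype n]
    [Fintype ι] [DecidableEq ι] (A : Matrix m n R) {s : ι → m} {t : ι → n}
    (hrows : ∀ r, A r ∈ span R (range fun i => A (s i)))
    (hcols : LinearIndependent R fun j => Aᵀ (t j)) :
    (A.submatrix s t).det ≠ 0 := by
  obtain ⟨D, hD⟩ := exists_mul_eq_of_forall_mem_span_range A (A.submatrix s id) hrows
  have hfactor : A.submatrix id t = D * A.submatrix s t := by
    conv_lhs => rw [← hD]
    rfl
  intro hdet
  obtain ⟨c, hc0, hc⟩ := exists_mulVec_eq_zero_iff.2 hdet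
  have hker : A.submatrix id t *ᵥ c = 0 := by
    rw [hfactor, ← mulVec_mulVec, hc, mulVec_zero]
  exact hc0 (mulVec_injective_iff.2 hcols (hker.trans (mulVec_zero _).symm))

theorem det_submatrix_ne_zero_of_transpose_eq_neg [IsDomain R] [Fintype n] [Fintype ι]
    [DecidableEq ι] {A : Matrix n n R} (hA : Aᵀ = -A) {s : ι → n}
    (hindep : LinearIndependent R fun i => A (s i))
    (hspan : ∀ r, A r ∈ span R (range fun i => A (s i))) :
    (A.submatrix s s).det ≠ 0 :=
  A.det_submatrix_ne_zero_of_mem_span_of_linearIndependent hspan (by rw [hA]; exact hindep.neg)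

end Matrix

theorem tutteMatrix_transpose {V : Type*} [Fintype V] [LinearOrder V]
    (G : SimpleGraph V) [DecidableRel G.Adj] : (tutteMatrix G)ᵀ = -tutteMatrix G := by
  ext u v
  simp only [Matrix.transpose_apply, Matrix.neg_apply, tutteMatrix, Matrix.of_apply,
    G.adj_comm v u, Sym2.eq_swap (a := v)]
  split_ifs <;> grind [SimpleGraph.Adj.ne]

/-- If the rows of the Tutte matrix of `G` indexed by `I` form a row basis (they are
linearly independent and span the row space), then the principal submatrix `A_{I,I}` is
nonsingular. -/
theorem tutte_principal_submatrix_nonsingular {V : Type*} [Fintype V] [LinearOrder V]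
    (G : SimpleGraph V) [DecidableRel G.Adj] (I : Finset V)
    (hindep : LinearIndependent (FractionRing (MvPolynomial (Sym2 V) ℚ))
        fun i : {x // x ∈ I} => tutteMatrix G (i : V))
    (hspan : Submodule.span (FractionRing (MvPolynomial (Sym2 V) ℚ)) (tutteMatrix G '' ↑I) =
        Submodule.span (FractionRing (MvPolynomial (Sym2 V) ℚ))
          (Set.range (tutteMatrix G))) :
    ((tutteMatrix G).submatrix (fun i : {x // x ∈ I} => (i : V))
      (fun i : {x // x ∈ I} => (i : V))).det ≠ 0 := by
  refine Matrix.det_submatrix_ne_zero_of_transpose_eq_neg (tutteMatrix_transpose G) hindep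
    fun r => ?_
  have hr : tutteMatrix G r ∈ span _ (tutteMatrix G '' ↑I) :=
    hspan ▸ subset_span (mem_range_self r)
  rwa [image_eq_range (tutteMatrix G : V → V → _)] at hr
end

section
/- Let B be the biadjacency matrix of a forest F whose two sides each have m vertices. Then det(B) ≠ 0 if and only if F has a perfect matching. Moreover, a forest has at most one perfect matching. -/
/-!
The symmetric difference of two perfect matchings is a disjoint union of cycles, so in a forest
it is empty: a forest has at most one perfect matching. In a bipartite graph on `[m] ⊕ [m]`,
perfect matchings correspond to the permutations `σ` with `B (σ i) i = 1` for all `i`, i.e. to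
the nonzero terms of the Leibniz expansion of `det B`. For a forest there is thus at most one
such term, and it is `± 1`.
-/

open Equiv

theorem Matrix.det_of_boole_ne_zero_iff {n R : Type*} [Fintype n] [DecidableEq n] [CommRing R]
    [Nontrivial R] (r : n → n → Prop) [DecidableRel r]
    (huniq : ∀ σ τ : Perm n, (∀ i, r (σ i) i) → (∀ i, r (τ i) i) → σ = τ) :
    (Matrix.of fun i j => if r i j then (1 : R) else 0).det ≠ 0 ↔
      ∃ σ : Perm n, ∀ i, r (σ i) i := by
  have hterm : ∀ σ : Perm n, Perm.sign σ • ∏ i, (if r (σ i) i then (1 : R) else 0) =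
      if ∀ i, r (σ i) i then Perm.sign σ • (1 : R) else 0 := by
    intro σ
    rw [Fintype.prod_boole, smul_ite, smul_zero]
  simp only [Matrix.det_apply, Matrix.of_apply, hterm]
  constructor
  · contrapose!
    intro h
    exact Finset.sum_eq_zero fun σ _ => if_neg (not_forall.mpr (h σ))
  · rintro ⟨σ, hσ⟩
    rw [Finset.sum_eq_single σ (fun τ _ hτ => if_neg fun h => hτ (huniq τ σ h hσ)) (by simp),
      if_pos hσ, smul_ne_zero_iff_ne]
    exact one_ne_zero

namespace SimpleGraph

variable {V : Type*} {G : SimpleGraph V}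

lemma IsAcyclic.eq_bot_of_isCycles [Finite V] (hG : G.IsAcyclic) (hcyc : G.IsCycles) : G = ⊥ := by
  ext v w
  refine ⟨fun hadj => ?_, fun h => h.elim⟩
  exact isAcyclic_iff_forall_adj_isBridge.mp hG hadj (hcyc.reachable_deleteEdges hadj)

open scoped symmDiff in
lemma Subgraph.IsPerfectMatching.eq_of_isAcyclic [Finite V] (hG : G.IsAcyclic)
    {M N : G.Subgraph} (hM : M.IsPerfectMatching) (hN : N.IsPerfectMatching) : M = N := by
  have hcyc : (M.spanningCoe ∆ N.spanningCoe).IsCycles := hM.symmDiff_isCycles hN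
  have hle : M.spanningCoe ∆ N.spanningCoe ≤ G :=
    symmDiff_le_sup.trans (sup_le (Subgraph.spanningCoe_le M) (Subgraph.spanningCoe_le N))
  have hspan : M.spanningCoe = N.spanningCoe :=
    symmDiff_eq_bot.mp ((hG.anti hle).eq_bot_of_isCycles hcyc)
  exact Subgraph.verts_spanningCoe_injective
    (Prod.ext (hM.2.verts_eq_univ.trans hN.2.verts_eq_univ.symm) hspan)

@[simps]
def Subgraph.ofInvolutive (f : V → V) (hf : Function.Involutive f) (hadj : ∀ v, G.Adj v (f v)) :
    G.Subgraph where
  verts := Set.univ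
  Adj v w := f v = w
  adj_sub := by
    rintro v _ rfl
    exact hadj v
  edge_vert _ := trivial
  symm := ⟨by
    rintro v _ rfl
    exact hf v⟩

lemma Subgraph.isPerfectMatching_ofInvolutive {f : V → V} (hf : Function.Involutive f)
    (hadj : ∀ v, G.Adj v (f v)) : (ofInvolutive f hf hadj).IsPerfectMatching :=
  isPerfectMatching_iff.mpr fun v => ⟨f v, rfl, fun _ h => Eq.symm h⟩

lemma Subgraph.ofInvolutive_inj {f g : V → V} {hf : Function.Involutive f}
    {hg : Function.Involutive g} {hfG : ∀ v, G.Adj v (f v)} {hgG : ∀ v, G.Adj v (g v)} :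
    ofInvolutive f hf hfG = ofInvolutive g hg hgG ↔ f = g := by
  refine ⟨fun h => funext fun v => ?_, fun h => by subst h; rfl⟩
  have := congrArg (fun M : G.Subgraph => M.Adj v (f v)) h
  simpa [eq_comm] using this

end SimpleGraph

namespace Equiv.Perm

variable {n : Type*}

def sumInvolution (σ : Perm n) : n ⊕ n → n ⊕ n :=
  Sum.elim (Sum.inr ∘ σ.symm) (Sum.inl ∘ σ)

lemma sumInvolution_involutive (σ : Perm n) : Function.Involutive σ.sumInvolution := by
  rintro (i | i) <;> simp [sumInvolution]

lemma sumInvolution_injective : Function.Injective (sumInvolution (n := n)) := by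
  intro σ τ h
  ext i
  simpa [sumInvolution] using congrFun h (Sum.inr i)

end Equiv.Perm

namespace SimpleGraph

open Sum

variable {n : Type*} {G : SimpleGraph (n ⊕ n)}

lemma adj_sumInvolution {σ : Perm n} (hσ : ∀ i, G.Adj (inl (σ i)) (inr i)) :
    ∀ v, G.Adj v (σ.sumInvolution v)
  | inl j => by simpa [Perm.sumInvolution] using hσ (σ.symm j)
  | inr i => (hσ i).symm

lemma Subgraph.IsPerfectMatching.exists_perm [Finite n] (hright : ∀ i j, ¬ G.Adj (inr i) (inr j))
    {M : G.Subgraph} (hM : M.IsPerfectMatching) :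
    ∃ σ : Perm n, ∀ i, G.Adj (inl (σ i)) (inr i) := by
  have hpartner := isPerfectMatching_iff.mp hM
  have hleft : ∀ i, ∃ j, M.Adj (inl j) (inr i) := by
    intro i
    obtain ⟨w, hw, -⟩ := hpartner (inr i)
    cases w with
    | inl j => exact ⟨j, hw.symm⟩
    | inr j => exact (hright i j (M.adj_sub hw)).elim
  choose τ hτ using hleft
  have hτinj : Function.Injective τ := by
    intro i i' h
    have hi := hτ i
    rw [h] at hi
    exact inr_injective ((hpartner (inl (τ i'))).unique hi (hτ i'))
  exact ⟨Equiv.ofBijective τ (Finite.injective_iff_bijective.mp hτinj),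
    fun i => M.adj_sub (hτ i)⟩

lemma IsAcyclic.perm_eq_of_forall_adj [Finite n] (hG : G.IsAcyclic) {σ τ : Perm n}
    (hσ : ∀ i, G.Adj (inl (σ i)) (inr i)) (hτ : ∀ i, G.Adj (inl (τ i)) (inr i)) : σ = τ :=
  Perm.sumInvolution_injective <| Subgraph.ofInvolutive_inj.mp <|
    (Subgraph.isPerfectMatching_ofInvolutive σ.sumInvolution_involutive
      (adj_sumInvolution hσ)).eq_of_isAcyclic hG
      (Subgraph.isPerfectMatching_ofInvolutive τ.sumInvolution_involutive (adj_sumInvolution hτ))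

end SimpleGraph

open Classical in
/-- Let `F` be a forest on vertex set `[m] ⊕ [m]` that is bipartite with the two summands
as sides, and let `B` be its biadjacency matrix (`B i j = 1` iff the `i`-th left vertex is
adjacent to the `j`-th right vertex). Then `det B ≠ 0` iff `F` has a perfect matching;
moreover `F` has at most one perfect matching. -/
theorem forest_biadjacency_det_ne_zero_iff {m : ℕ}
    (G : SimpleGraph (Fin m ⊕ Fin m))
    (hbip : ∀ a b, G.Adj a b → (a.isLeft ∧ b.isRight) ∨ (a.isRight ∧ b.isLeft))
    (hforest : G.IsAcyclic) :
    ((Matrix.of fun i j : Fin m =>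
        if G.Adj (Sum.inl i) (Sum.inr j) then (1 : ℚ) else 0).det ≠ 0 ↔
      ∃ M : G.Subgraph, M.IsPerfectMatching) ∧
    ∀ M N : G.Subgraph, M.IsPerfectMatching → N.IsPerfectMatching → M = N := by
  have hright : ∀ i j, ¬ G.Adj (Sum.inr i) (Sum.inr j) := fun i j h => by simpa using hbip _ _ h
  refine ⟨?_, fun M N hM hN => hM.eq_of_isAcyclic hforest hN⟩
  rw [Matrix.det_of_boole_ne_zero_iff _ fun σ τ => hforest.perm_eq_of_forall_adj]
  constructor
  · rintro ⟨σ, hσ⟩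
    exact ⟨_, SimpleGraph.Subgraph.isPerfectMatching_ofInvolutive σ.sumInvolution_involutive
      (SimpleGraph.adj_sumInvolution hσ)⟩
  · rintro ⟨M, hM⟩
    exact hM.exists_perm hright
end

section
/- With T_{l,r} as defined recursively (root labeled {l,...,r} with unlabeled child whose children are the roots of the two halves), let i_1,...,i_{k−1} ∈ {l,...,r} and let I be the label of any vertex of T_{l,r} (i.e., I ∈ L_{l,r}). Attach pendant switch vertices to the vertices labeled {i_1},...,{i_{k−1}} and to the vertex labeled I, obtaining T_{l,r}^{{i_1},...,{i_{k−1}},I}. Then for S ⊆ {l,...,r}, the graph T_{l,r}^{{i_1},...,{i_{k−1}},I}(−S) has a perfect matching if and only if S = {l,...,r} \ {i_1,...,i_{k−1}, i'} for some i' ∈ I with i_1,...,i_{k−1},i' pairwise distinct. -/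
/-- The labels of the vertices of the recursively defined binary tree `T_{l,r}`: the root
is labeled by the interval `{l,…,r}` (encoded as the pair `(l, r)`), and its two subtrees
are `T_{l,⌊(l+r)/2⌋}` and `T_{⌊(l+r)/2⌋+1,r}`. -/
def treeLabels : ℕ → ℕ → Finset (ℕ × ℕ)
  | l, r =>
    if _ : l < r then
      insert (l, r) (treeLabels l ((l + r) / 2) ∪ treeLabels ((l + r) / 2 + 1) r)
    else {(l, l)}
  termination_by l r => r - l
  decreasing_by all_goals omega

/-- Vertices of the gadget graph: the labeled vertices of the tree (`lab`), the unlabeled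
companion of each internal labeled vertex (`mid`), and `k` pendant switch vertices. -/
inductive GadgetV (k : ℕ) where
  | lab : ℕ × ℕ → GadgetV k
  | mid : ℕ × ℕ → GadgetV k
  | switch : Fin k → GadgetV k
  deriving DecidableEq

/-- Base adjacency of the gadget: each internal labeled vertex `p` is joined to its
unlabeled child `mid p`, which is joined to the roots of the two subtrees; the `i`-th
switch vertex is pendant on the vertex labeled `a i`. -/
def gadgetBaseAdj (l r k : ℕ) (a : Fin k → ℕ × ℕ) : GadgetV k → GadgetV k → Prop :=
  fun u v =>
    (∃ p ∈ treeLabels l r, p.1 < p.2 ∧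
      ((u = .lab p ∧ v = .mid p) ∨
       (u = .mid p ∧ v = .lab (p.1, (p.1 + p.2) / 2)) ∨
       (u = .mid p ∧ v = .lab ((p.1 + p.2) / 2 + 1, p.2)))) ∨
    (∃ i : Fin k, u = .switch i ∧ v = .lab (a i))

/-- The gadget graph `T_{l,r}` with `k` switch vertices attached to the vertices labeled
`a 0, …, a (k-1)`. -/
def gadgetGraph (l r k : ℕ) (a : Fin k → ℕ × ℕ) : SimpleGraph (GadgetV k) where
  Adj u v := u ≠ v ∧ (gadgetBaseAdj l r k a u v ∨ gadgetBaseAdj l r k a v u)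
  symm := ⟨fun u v ⟨hne, h⟩ => ⟨hne.symm, h.symm⟩⟩
  loopless := ⟨fun _ ⟨hne, _⟩ => hne rfl⟩

/-- The vertices of the gadget that survive after deleting the leaves labeled `{i}` for
`i ∈ S`: the remaining labeled tree vertices, all unlabeled internal companions, and all
switch vertices. -/
def gadgetActive (l r : ℕ) {k : ℕ} (S : Finset ℕ) : Set (GadgetV k) :=
  fun v => match v with
    | .lab p => p ∈ treeLabels l r ∧ ¬(p.1 = p.2 ∧ p.1 ∈ S)
    | .mid p => p ∈ treeLabels l r ∧ p.1 < p.2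
    | .switch _ => True


/-! ### Auxiliary machinery -/

/-- A perfect matching of the subgraph induced on `s`, encoded as an involution. -/
def HasPM {V : Type*} (G : SimpleGraph V) (s : Set V) : Prop :=
  ∃ f : V → V, ∀ v ∈ s, f v ∈ s ∧ G.Adj v (f v) ∧ f (f v) = v

theorem hasPM_iff_exists_pm {V : Type*} (G : SimpleGraph V) (s : Set V) :
    (∃ M : (G.induce s).Subgraph, M.IsPerfectMatching) ↔ HasPM G s := by
  classical
  constructor
  · rintro ⟨M, hm, hsp⟩
    have key : ∀ v : s, ∃! w : s, M.Adj v w := fun v => hm (hsp v)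
    set g : s → s := fun v => (key v).exists.choose with hgdef
    have hg : ∀ v : s, M.Adj v (g v) := fun v => (key v).exists.choose_spec
    have hgg : ∀ v : s, g (g v) = v := by
      intro v
      exact ((key (g v)).unique (hg (g v)) (M.adj_symm (hg v))).symm ▸ rfl
    refine ⟨fun x => if h : x ∈ s then (g ⟨x, h⟩ : V) else x, ?_⟩
    intro v hv
    simp only [dif_pos hv]
    refine ⟨(g ⟨v, hv⟩).2, ?_, ?_⟩
    · exact (M.adj_sub (hg ⟨v, hv⟩))
    · rw [dif_pos (g ⟨v, hv⟩).2]
      have : g ⟨(g ⟨v, hv⟩ : V), (g ⟨v, hv⟩).2⟩ = g (g ⟨v, hv⟩) := by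
        congr
      rw [this, hgg]
  · rintro ⟨f, hf⟩
    refine ⟨⟨Set.univ, fun u v => (f u : V) = v ∧ (G.induce s).Adj u v, ?_, ?_, ?_⟩, ?_, ?_⟩
    · exact fun {u v} h => h.2
    · intro u v _; trivial
    · refine ⟨?_⟩; rintro u v ⟨h1, h2⟩
      refine ⟨?_, h2.symm⟩
      have h3 := (hf u u.2).2.2
      rw [h1] at h3
      exact h3
    · intro v _
      refine ⟨⟨f v, (hf v v.2).1⟩, ⟨rfl, ?_⟩, ?_⟩
      · exact (hf v v.2).2.1
      · rintro w ⟨h1, _⟩; exact Subtype.ext h1.symm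
    · intro v; trivial

section PMLemmas
variable {V : Type*} {G : SimpleGraph V} {s t : Set V}

theorem hasPM_empty : HasPM G ∅ := ⟨id, by simp⟩

theorem not_hasPM_singleton {u : V} : ¬ HasPM G {u} := by
  rintro ⟨f, hf⟩
  obtain ⟨h1, h2, -⟩ := hf u rfl
  rw [Set.mem_singleton_iff] at h1
  rw [h1] at h2
  exact G.loopless.irrefl u h2

theorem hasPM_pair {u v : V} (h : G.Adj u v) : HasPM G {u, v} := by
  classical
  refine ⟨fun x => if x = u then v else if x = v then u else x, ?_⟩
  have hne : u ≠ v := h.ne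
  rintro w (rfl | rfl)
  · simp [hne, hne.symm, h]
  · simp [hne, hne.symm, h.symm]

theorem HasPM.union (hd : Disjoint s t) (h1 : HasPM G s) (h2 : HasPM G t) :
    HasPM G (s ∪ t) := by
  classical
  obtain ⟨f, hf⟩ := h1
  obtain ⟨g, hg⟩ := h2
  refine ⟨fun x => if x ∈ s then f x else g x, ?_⟩
  rintro v (hv | hv)
  · obtain ⟨m1, m2, m3⟩ := hf v hv
    simp only [if_pos hv, if_pos m1]
    exact ⟨Or.inl m1, m2, m3⟩
  · have hvs : v ∉ s := fun h => hd.ne_of_mem h hv rfl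
    obtain ⟨m1, m2, m3⟩ := hg v hv
    have : g v ∉ s := fun h => hd.ne_of_mem h m1 rfl
    simp only [if_neg hvs, if_neg this]
    exact ⟨Or.inr m1, m2, m3⟩

/-- Removing an `f`-closed part of the vertex set keeps the rest perfectly matched. -/
theorem matching_diff {f : V → V} (hf : ∀ v ∈ s, f v ∈ s ∧ G.Adj v (f v) ∧ f (f v) = v)
    {T : Set V} (hT : ∀ v ∈ s, v ∈ T → f v ∈ T) :
    ∀ v ∈ s \ T, f v ∈ s \ T ∧ G.Adj v (f v) ∧ f (f v) = v := by
  rintro v ⟨hv, hvT⟩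
  obtain ⟨m1, m2, m3⟩ := hf v hv
  refine ⟨⟨m1, fun hmem => hvT ?_⟩, m2, m3⟩
  have := hT (f v) m1 hmem
  rwa [m3] at this

end PMLemmas

/-! ### Structure of `treeLabels` -/

theorem treeLabels_of_lt {l r : ℕ} (h : l < r) :
    treeLabels l r =
      insert (l, r) (treeLabels l ((l + r) / 2) ∪ treeLabels ((l + r) / 2 + 1) r) := by
  rw [treeLabels]; simp [h]

theorem treeLabels_of_ge {l r : ℕ} (h : ¬ l < r) : treeLabels l r = {(l, l)} := by
  rw [treeLabels]; simp [h]

theorem mem_treeLabels_bounds_aux : ∀ (n l r : ℕ), r - l = n → l ≤ r → ∀ {p : ℕ × ℕ},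
    p ∈ treeLabels l r → l ≤ p.1 ∧ p.1 ≤ p.2 ∧ p.2 ≤ r := by
  intro n
  induction n using Nat.strong_induction_on with
  | _ n ih =>
    intro l r hn hlr p hp
    by_cases h : l < r
    · rw [treeLabels_of_lt h] at hp
      simp only [Finset.mem_insert, Finset.mem_union] at hp
      rcases hp with rfl | hp | hp
      · omega
      · have := ih ((l+r)/2 - l) (by omega) l ((l+r)/2) rfl (by omega) hp; omega
      · have := ih (r - ((l+r)/2+1)) (by omega) ((l+r)/2+1) r rfl (by omega) hp; omega
    · rw [treeLabels_of_ge h] at hp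
      simp at hp
      subst hp; omega

theorem mem_treeLabels_bounds {l r : ℕ} (hlr : l ≤ r) {p : ℕ × ℕ} (hp : p ∈ treeLabels l r) :
    l ≤ p.1 ∧ p.1 ≤ p.2 ∧ p.2 ≤ r := mem_treeLabels_bounds_aux _ l r rfl hlr hp

theorem leaf_mem_treeLabels_aux : ∀ (n l r : ℕ), r - l = n → ∀ {x : ℕ}, l ≤ x → x ≤ r →
    (x, x) ∈ treeLabels l r := by
  intro n
  induction n using Nat.strong_induction_on with
  | _ n ih =>
    intro l r hn x h1 h2
    by_cases h : l < r
    · rw [treeLabels_of_lt h]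
      simp only [Finset.mem_insert, Finset.mem_union]
      by_cases hx : x ≤ (l+r)/2
      · exact Or.inr (Or.inl (ih ((l+r)/2 - l) (by omega) _ _ rfl h1 hx))
      · exact Or.inr (Or.inr (ih (r - ((l+r)/2+1)) (by omega) _ _ rfl (by omega) h2))
    · rw [treeLabels_of_ge h]; simp; omega

theorem leaf_mem_treeLabels {l r x : ℕ} (h1 : l ≤ x) (h2 : x ≤ r) : (x, x) ∈ treeLabels l r :=
  leaf_mem_treeLabels_aux _ l r rfl h1 h2

theorem root_mem_treeLabels {l r : ℕ} (hlr : l ≤ r) : (l, r) ∈ treeLabels l r := by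
  by_cases h : l < r
  · rw [treeLabels_of_lt h]; exact Finset.mem_insert_self _ _
  · have : l = r := by omega
    subst this
    rw [treeLabels_of_ge h]; simp

theorem treeLabels_subset_left {l r : ℕ} (h : l < r) :
    treeLabels l ((l + r) / 2) ⊆ treeLabels l r := by
  rw [treeLabels_of_lt h]
  exact fun q hq => Finset.mem_insert_of_mem (Finset.mem_union_left _ hq)

theorem treeLabels_subset_right {l r : ℕ} (h : l < r) :
    treeLabels ((l + r) / 2 + 1) r ⊆ treeLabels l r := by
  rw [treeLabels_of_lt h]
  exact fun q hq => Finset.mem_insert_of_mem (Finset.mem_union_right _ hq)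

/-! ### Adjacency classification in the gadget graph -/

section Adjacency
variable {l₀ r₀ κ : ℕ} {a : Fin κ → ℕ × ℕ}

theorem adj_switch {j : Fin κ} {v : GadgetV κ} (h : (gadgetGraph l₀ r₀ κ a).Adj (.switch j) v) :
    v = .lab (a j) := by
  obtain ⟨-, h | h⟩ := (show _ ≠ _ ∧ _ from h) <;>
    rcases h with ⟨p, hp, hint, (⟨h1, h2⟩|⟨h1, h2⟩|⟨h1, h2⟩)⟩ | ⟨i, h1, h2⟩ <;> simp_all

theorem adj_mid {q : ℕ × ℕ} {v : GadgetV κ} (h : (gadgetGraph l₀ r₀ κ a).Adj (.mid q) v) :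
    q ∈ treeLabels l₀ r₀ ∧ q.1 < q.2 ∧
      (v = .lab q ∨ v = .lab (q.1, (q.1 + q.2) / 2) ∨ v = .lab ((q.1 + q.2) / 2 + 1, q.2)) := by
  obtain ⟨-, h | h⟩ := (show _ ≠ _ ∧ _ from h) <;>
    rcases h with ⟨p, hp, hint, (⟨h1, h2⟩|⟨h1, h2⟩|⟨h1, h2⟩)⟩ | ⟨i, h1, h2⟩ <;> simp_all

theorem adj_lab {q : ℕ × ℕ} {v : GadgetV κ} (h : (gadgetGraph l₀ r₀ κ a).Adj (.lab q) v) :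
    (q ∈ treeLabels l₀ r₀ ∧ q.1 < q.2 ∧ v = .mid q) ∨
    (∃ p ∈ treeLabels l₀ r₀, p.1 < p.2 ∧
      (q = (p.1, (p.1 + p.2) / 2) ∨ q = ((p.1 + p.2) / 2 + 1, p.2)) ∧ v = .mid p) ∨
    (∃ i, q = a i ∧ v = .switch i) := by
  obtain ⟨-, h | h⟩ := (show _ ≠ _ ∧ _ from h) <;>
    rcases h with ⟨p, hp, hint, (⟨h1, h2⟩|⟨h1, h2⟩|⟨h1, h2⟩)⟩ | ⟨i, h1, h2⟩
  · simp_all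
  · simp_all
  · simp_all
  · simp_all
  · exact absurd h2 (by simp)
  · injection h2 with h2; exact Or.inr (Or.inl ⟨p, hp, hint, Or.inl h2, h1⟩)
  · injection h2 with h2; exact Or.inr (Or.inl ⟨p, hp, hint, Or.inr h2, h1⟩)
  · injection h2 with h2; exact Or.inr (Or.inr ⟨i, h2, h1⟩)

theorem adj_lab_mid {p : ℕ × ℕ} (hp : p ∈ treeLabels l₀ r₀) (h : p.1 < p.2) :
    (gadgetGraph l₀ r₀ κ a).Adj (.lab p) (.mid p) :=
  by show _ ≠ _ ∧ _; exact ⟨by simp, Or.inl (Or.inl ⟨p, hp, h, Or.inl ⟨rfl, rfl⟩⟩)⟩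

theorem adj_mid_labL {p : ℕ × ℕ} (hp : p ∈ treeLabels l₀ r₀) (h : p.1 < p.2) :
    (gadgetGraph l₀ r₀ κ a).Adj (.mid p) (.lab (p.1, (p.1 + p.2) / 2)) :=
  by show _ ≠ _ ∧ _; exact ⟨by simp, Or.inl (Or.inl ⟨p, hp, h, Or.inr (Or.inl ⟨rfl, rfl⟩)⟩)⟩

theorem adj_mid_labR {p : ℕ × ℕ} (hp : p ∈ treeLabels l₀ r₀) (h : p.1 < p.2) :
    (gadgetGraph l₀ r₀ κ a).Adj (.mid p) (.lab ((p.1 + p.2) / 2 + 1, p.2)) :=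
  by show _ ≠ _ ∧ _; exact ⟨by simp, Or.inl (Or.inl ⟨p, hp, h, Or.inr (Or.inr ⟨rfl, rfl⟩)⟩)⟩

theorem adj_switch_lab (i : Fin κ) :
    (gadgetGraph l₀ r₀ κ a).Adj (.switch i) (.lab (a i)) :=
  by show _ ≠ _ ∧ _; exact ⟨by simp, Or.inl (Or.inr ⟨i, rfl, rfl⟩)⟩

end Adjacency

/-! ### The surviving tree vertex sets -/

/-- The vertices of the subtree `T_{l,r}` that survive when exactly the leaves with labels
in `A` are kept. -/
def tV {κ : ℕ} (l r : ℕ) (A : Finset ℕ) : Set (GadgetV κ) := fun v =>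
  match v with
  | .lab p => p ∈ treeLabels l r ∧ (p.1 = p.2 → p.1 ∈ A)
  | .mid p => p ∈ treeLabels l r ∧ p.1 < p.2
  | .switch _ => False

section TV
variable {κ : ℕ} {A B : Finset ℕ}

@[simp] theorem mem_tV_lab {l r : ℕ} {p : ℕ × ℕ} :
    (GadgetV.lab p : GadgetV κ) ∈ tV l r A ↔ p ∈ treeLabels l r ∧ (p.1 = p.2 → p.1 ∈ A) :=
  Iff.rfl

@[simp] theorem mem_tV_mid {l r : ℕ} {p : ℕ × ℕ} :
    (GadgetV.mid p : GadgetV κ) ∈ tV l r A ↔ p ∈ treeLabels l r ∧ p.1 < p.2 :=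
  Iff.rfl

@[simp] theorem not_mem_tV_switch {l r : ℕ} {i : Fin κ} :
    (GadgetV.switch i : GadgetV κ) ∉ tV l r A := fun h => h

theorem tV_disjoint {l1 r1 l2 r2 : ℕ} (h1 : l1 ≤ r1) (h2 : l2 ≤ r2) (h12 : r1 < l2) :
    Disjoint (tV (κ := κ) l1 r1 A) (tV l2 r2 B) := by
  rw [Set.disjoint_left]
  intro v hv1 hv2
  cases v with
  | lab p =>
    have b1 := mem_treeLabels_bounds h1 hv1.1
    have b2 := mem_treeLabels_bounds h2 hv2.1
    omega
  | mid p =>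
    have b1 := mem_treeLabels_bounds h1 hv1.1
    have b2 := mem_treeLabels_bounds h2 hv2.1
    omega
  | switch i => exact hv1

variable {l₀ r₀ : ℕ} {a : Fin κ → ℕ × ℕ}

theorem no_cross {l1 r1 l2 r2 : ℕ} (h1 : l1 ≤ r1) (h2 : l2 ≤ r2) (h12 : r1 < l2)
    {v w : GadgetV κ} (hv : v ∈ tV l1 r1 A) (hw : w ∈ tV l2 r2 B) :
    ¬ (gadgetGraph l₀ r₀ κ a).Adj v w := by
  intro hadj
  cases v with
  | switch i => exact hv
  | lab q =>
    have bq := mem_treeLabels_bounds h1 hv.1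
    rcases adj_lab hadj with ⟨-, -, rfl⟩ | ⟨p, -, hpint, hch, rfl⟩ | ⟨i, -, rfl⟩
    · have b2 := mem_treeLabels_bounds h2 hw.1
      omega
    · have b2 := mem_treeLabels_bounds h2 hw.1
      rcases hch with hch | hch <;> (rw [Prod.ext_iff] at hch; simp at hch; omega)
    · exact hw
  | mid q =>
    have bq := mem_treeLabels_bounds h1 hv.1
    obtain ⟨-, hqint, rfl | rfl | rfl⟩ := adj_mid hadj <;>
      · have b2 := mem_treeLabels_bounds h2 hw.1
        omega

theorem lab_root_not_mem_left {l r : ℕ} (h : l < r) :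
    (GadgetV.lab (l, r) : GadgetV κ) ∉ tV l ((l + r) / 2) A := by
  intro hmem
  have := mem_treeLabels_bounds (by omega) hmem.1
  simp only at this
  omega

theorem lab_root_not_mem_right {l r : ℕ} (h : l < r) :
    (GadgetV.lab (l, r) : GadgetV κ) ∉ tV ((l + r) / 2 + 1) r A := by
  intro hmem
  have := mem_treeLabels_bounds (by omega) hmem.1
  simp only at this
  omega

theorem mid_root_not_mem_left {l r : ℕ} (h : l < r) :
    (GadgetV.mid (l, r) : GadgetV κ) ∉ tV l ((l + r) / 2) A := by
  intro hmem
  have := mem_treeLabels_bounds (by omega) hmem.1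
  simp only at this
  omega

theorem mid_root_not_mem_right {l r : ℕ} (h : l < r) :
    (GadgetV.mid (l, r) : GadgetV κ) ∉ tV ((l + r) / 2 + 1) r A := by
  intro hmem
  have := mem_treeLabels_bounds (by omega) hmem.1
  simp only at this
  omega

theorem mem_tV_iff {l r : ℕ} (h : l < r) {v : GadgetV κ} :
    v ∈ tV l r A ↔ (v = .lab (l, r) ∨ v = .mid (l, r) ∨
      v ∈ tV l ((l + r) / 2) A ∨ v ∈ tV ((l + r) / 2 + 1) r A) := by
  cases v with
  | lab p =>
    simp only [mem_tV_lab, treeLabels_of_lt h, Finset.mem_insert, Finset.mem_union,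
      GadgetV.lab.injEq]
    constructor
    · rintro ⟨rfl | hp | hp, hleaf⟩
      · exact Or.inl rfl
      · exact Or.inr (Or.inr (Or.inl ⟨hp, hleaf⟩))
      · exact Or.inr (Or.inr (Or.inr ⟨hp, hleaf⟩))
    · rintro (rfl | heq | ⟨hp, hleaf⟩ | ⟨hp, hleaf⟩)
      · exact ⟨Or.inl rfl, by simp; omega⟩
      · exact absurd heq (by simp)
      · exact ⟨Or.inr (Or.inl hp), hleaf⟩
      · exact ⟨Or.inr (Or.inr hp), hleaf⟩
  | mid p =>
    simp only [mem_tV_mid, treeLabels_of_lt h, Finset.mem_insert, Finset.mem_union,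
      GadgetV.mid.injEq]
    constructor
    · rintro ⟨rfl | hp | hp, hint⟩
      · exact Or.inr (Or.inl rfl)
      · exact Or.inr (Or.inr (Or.inl ⟨hp, hint⟩))
      · exact Or.inr (Or.inr (Or.inr ⟨hp, hint⟩))
    · rintro (heq | rfl | ⟨hp, hint⟩ | ⟨hp, hint⟩)
      · exact absurd heq (by simp)
      · exact ⟨Or.inl rfl, h⟩
      · exact ⟨Or.inr (Or.inl hp), hint⟩
      · exact ⟨Or.inr (Or.inr hp), hint⟩
  | switch i =>
    simp [tV]

theorem lab_root_mem_tV {l r : ℕ} (h : l < r) :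
    (GadgetV.lab (l, r) : GadgetV κ) ∈ tV l r A :=
  ⟨root_mem_treeLabels (by omega), by simp; omega⟩

theorem mid_root_mem_tV {l r : ℕ} (h : l < r) :
    (GadgetV.mid (l, r) : GadgetV κ) ∈ tV l r A :=
  ⟨root_mem_treeLabels (by omega), h⟩

end TV

/-! ### Set decompositions -/

section SetEq
variable {κ : ℕ} {A : Finset ℕ} {l r : ℕ}

theorem mem_treeLabels_leaf_iff {l : ℕ} {p : ℕ × ℕ} : p ∈ treeLabels l l ↔ p = (l, l) := by
  rw [treeLabels_of_ge (lt_irrefl l), Finset.mem_singleton]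

theorem tV_leaf_of_mem (h : l ∈ A) : tV (κ := κ) l l A = {GadgetV.lab (l, l)} := by
  ext v
  cases v with
  | lab p =>
    simp only [mem_tV_lab, mem_treeLabels_leaf_iff, Set.mem_singleton_iff, GadgetV.lab.injEq]
    constructor
    · rintro ⟨rfl, -⟩; rfl
    · rintro rfl; exact ⟨rfl, fun _ => h⟩
  | mid p =>
    simp only [mem_tV_mid, mem_treeLabels_leaf_iff, Set.mem_singleton_iff]
    constructor
    · rintro ⟨rfl, hlt⟩; omega
    · rintro h'; exact absurd h' (by simp)
  | switch i =>
    simp only [Set.mem_singleton_iff]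
    constructor
    · rintro h'; exact absurd h' not_mem_tV_switch
    · rintro h'; exact absurd h' (by simp)

theorem tV_leaf_of_not_mem (h : l ∉ A) : tV (κ := κ) l l A = ∅ := by
  ext v
  simp only [Set.mem_empty_iff_false, iff_false]
  cases v with
  | lab p =>
    simp only [mem_tV_lab, mem_treeLabels_leaf_iff]
    rintro ⟨rfl, hl⟩
    exact h (hl rfl)
  | mid p =>
    simp only [mem_tV_mid, mem_treeLabels_leaf_iff]
    rintro ⟨rfl, hlt⟩
    omega
  | switch i => exact not_mem_tV_switch

theorem tV_leaf_diff : tV (κ := κ) l l A \ {GadgetV.lab (l, l)} = ∅ := by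
  ext v
  simp only [Set.mem_empty_iff_false, iff_false, Set.mem_diff, Set.mem_singleton_iff]
  cases v with
  | lab p =>
    simp only [mem_tV_lab, mem_treeLabels_leaf_iff]
    rintro ⟨⟨rfl, -⟩, hne⟩
    exact hne rfl
  | mid p =>
    simp only [mem_tV_mid, mem_treeLabels_leaf_iff]
    rintro ⟨⟨rfl, hlt⟩, -⟩
    omega
  | switch i => exact fun h' => not_mem_tV_switch h'.1

theorem eq1 (h : l < r) :
    tV (κ := κ) l r A \ {GadgetV.lab (l, r), GadgetV.mid (l, r)} =
      tV l ((l + r) / 2) A ∪ tV ((l + r) / 2 + 1) r A := by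
  ext v
  have hm1 : v ∈ tV (κ := κ) l ((l+r)/2) A → v ≠ .lab (l, r) := fun h1 h2 => lab_root_not_mem_left h (h2 ▸ h1)
  have hm2 : v ∈ tV (κ := κ) l ((l+r)/2) A → v ≠ .mid (l, r) := fun h1 h2 => mid_root_not_mem_left h (h2 ▸ h1)
  have hm3 : v ∈ tV (κ := κ) ((l+r)/2+1) r A → v ≠ .lab (l, r) := fun h1 h2 => lab_root_not_mem_right h (h2 ▸ h1)
  have hm4 : v ∈ tV (κ := κ) ((l+r)/2+1) r A → v ≠ .mid (l, r) := fun h1 h2 => mid_root_not_mem_right h (h2 ▸ h1)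
  simp only [Set.mem_diff, Set.mem_union, Set.mem_insert_iff, Set.mem_singleton_iff,
    mem_tV_iff h]
  tauto

theorem eq2 (h : l < r) :
    tV (κ := κ) l r A = ({GadgetV.lab (l, r), GadgetV.mid (l, r)} : Set (GadgetV κ)) ∪
      (tV l ((l + r) / 2) A ∪ tV ((l + r) / 2 + 1) r A) := by
  ext v
  simp only [Set.mem_union, Set.mem_insert_iff, Set.mem_singleton_iff, mem_tV_iff h]
  tauto

theorem eq3L (h : l < r) {I : ℕ × ℕ} (hI : I ∈ treeLabels l ((l + r) / 2)) :
    (tV (κ := κ) l r A \ {GadgetV.lab I}) \ {GadgetV.lab (l, r), GadgetV.mid (l, r)} =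
      (tV l ((l + r) / 2) A \ {GadgetV.lab I}) ∪ tV ((l + r) / 2 + 1) r A := by
  have hIb := mem_treeLabels_bounds (by omega : l ≤ (l+r)/2) hI
  ext v
  have hm1 : v ∈ tV (κ := κ) l ((l+r)/2) A → v ≠ .lab (l, r) := fun h1 h2 => lab_root_not_mem_left h (h2 ▸ h1)
  have hm2 : v ∈ tV (κ := κ) l ((l+r)/2) A → v ≠ .mid (l, r) := fun h1 h2 => mid_root_not_mem_left h (h2 ▸ h1)
  have hm3 : v ∈ tV (κ := κ) ((l+r)/2+1) r A → v ≠ .lab (l, r) := fun h1 h2 => lab_root_not_mem_right h (h2 ▸ h1)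
  have hm4 : v ∈ tV (κ := κ) ((l+r)/2+1) r A → v ≠ .mid (l, r) := fun h1 h2 => mid_root_not_mem_right h (h2 ▸ h1)
  have hI1 : v = GadgetV.lab I → v ∉ tV (κ := κ) ((l+r)/2+1) r A := by
    rintro rfl hmem
    have := mem_treeLabels_bounds (by omega : (l+r)/2+1 ≤ r) hmem.1
    omega
  simp only [Set.mem_diff, Set.mem_union, Set.mem_insert_iff, Set.mem_singleton_iff,
    mem_tV_iff h]
  tauto

theorem eq4L (h : l < r) {I : ℕ × ℕ} (hI : I ∈ treeLabels l ((l + r) / 2)) :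
    tV (κ := κ) l r A \ {GadgetV.lab I} =
      ({GadgetV.lab (l, r), GadgetV.mid (l, r)} : Set (GadgetV κ)) ∪
        ((tV l ((l + r) / 2) A \ {GadgetV.lab I}) ∪ tV ((l + r) / 2 + 1) r A) := by
  have hIb := mem_treeLabels_bounds (by omega : l ≤ (l+r)/2) hI
  ext v
  have hI1 : v = GadgetV.lab I → v ∉ tV (κ := κ) ((l+r)/2+1) r A := by
    rintro rfl hmem
    have := mem_treeLabels_bounds (by omega : (l+r)/2+1 ≤ r) hmem.1
    omega
  have hI2 : v = GadgetV.lab I → v ≠ .lab (l, r) := by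
    rintro rfl h2
    injection h2 with h2
    rw [Prod.ext_iff] at h2
    omega
  have hI3 : v = GadgetV.lab I → v ≠ .mid (l, r) := by
    rintro rfl h2
    exact absurd h2 (by simp)
  simp only [Set.mem_diff, Set.mem_union, Set.mem_insert_iff, Set.mem_singleton_iff,
    mem_tV_iff h]
  tauto

theorem eq3R (h : l < r) {I : ℕ × ℕ} (hI : I ∈ treeLabels ((l + r) / 2 + 1) r) :
    (tV (κ := κ) l r A \ {GadgetV.lab I}) \ {GadgetV.lab (l, r), GadgetV.mid (l, r)} =
      tV l ((l + r) / 2) A ∪ (tV ((l + r) / 2 + 1) r A \ {GadgetV.lab I}) := by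
  have hIb := mem_treeLabels_bounds (by omega : (l+r)/2+1 ≤ r) hI
  ext v
  have hm1 : v ∈ tV (κ := κ) l ((l+r)/2) A → v ≠ .lab (l, r) := fun h1 h2 => lab_root_not_mem_left h (h2 ▸ h1)
  have hm2 : v ∈ tV (κ := κ) l ((l+r)/2) A → v ≠ .mid (l, r) := fun h1 h2 => mid_root_not_mem_left h (h2 ▸ h1)
  have hm3 : v ∈ tV (κ := κ) ((l+r)/2+1) r A → v ≠ .lab (l, r) := fun h1 h2 => lab_root_not_mem_right h (h2 ▸ h1)
  have hm4 : v ∈ tV (κ := κ) ((l+r)/2+1) r A → v ≠ .mid (l, r) := fun h1 h2 => mid_root_not_mem_right h (h2 ▸ h1)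
  have hI1 : v = GadgetV.lab I → v ∉ tV (κ := κ) l ((l+r)/2) A := by
    rintro rfl hmem
    have := mem_treeLabels_bounds (by omega : l ≤ (l+r)/2) hmem.1
    omega
  simp only [Set.mem_diff, Set.mem_union, Set.mem_insert_iff, Set.mem_singleton_iff,
    mem_tV_iff h]
  tauto

theorem eq4R (h : l < r) {I : ℕ × ℕ} (hI : I ∈ treeLabels ((l + r) / 2 + 1) r) :
    tV (κ := κ) l r A \ {GadgetV.lab I} =
      ({GadgetV.lab (l, r), GadgetV.mid (l, r)} : Set (GadgetV κ)) ∪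
        (tV l ((l + r) / 2) A ∪ (tV ((l + r) / 2 + 1) r A \ {GadgetV.lab I})) := by
  have hIb := mem_treeLabels_bounds (by omega : (l+r)/2+1 ≤ r) hI
  ext v
  have hI1 : v = GadgetV.lab I → v ∉ tV (κ := κ) l ((l+r)/2) A := by
    rintro rfl hmem
    have := mem_treeLabels_bounds (by omega : l ≤ (l+r)/2) hmem.1
    omega
  have hI2 : v = GadgetV.lab I → v ≠ .lab (l, r) := by
    rintro rfl h2
    injection h2 with h2
    rw [Prod.ext_iff] at h2
    omega
  have hI3 : v = GadgetV.lab I → v ≠ .mid (l, r) := by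
    rintro rfl h2
    exact absurd h2 (by simp)
  simp only [Set.mem_diff, Set.mem_union, Set.mem_insert_iff, Set.mem_singleton_iff,
    mem_tV_iff h]
  tauto

theorem eq5L (h : l < r) :
    (tV (κ := κ) l r A \ {GadgetV.lab (l, r)}) \ {GadgetV.mid (l, r), GadgetV.lab (l, (l + r) / 2)} =
      (tV l ((l + r) / 2) A \ {GadgetV.lab (l, (l + r) / 2)}) ∪ tV ((l + r) / 2 + 1) r A := by
  ext v
  have hm1 : v ∈ tV (κ := κ) l ((l+r)/2) A → v ≠ .lab (l, r) := fun h1 h2 => lab_root_not_mem_left h (h2 ▸ h1)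
  have hm2 : v ∈ tV (κ := κ) l ((l+r)/2) A → v ≠ .mid (l, r) := fun h1 h2 => mid_root_not_mem_left h (h2 ▸ h1)
  have hm3 : v ∈ tV (κ := κ) ((l+r)/2+1) r A → v ≠ .lab (l, r) := fun h1 h2 => lab_root_not_mem_right h (h2 ▸ h1)
  have hm4 : v ∈ tV (κ := κ) ((l+r)/2+1) r A → v ≠ .mid (l, r) := fun h1 h2 => mid_root_not_mem_right h (h2 ▸ h1)
  have hI1 : v = GadgetV.lab (l, (l + r) / 2) → v ∉ tV (κ := κ) ((l+r)/2+1) r A := by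
    rintro rfl hmem
    have := mem_treeLabels_bounds (by omega : (l+r)/2+1 ≤ r) hmem.1
    simp only at this
    omega
  simp only [Set.mem_diff, Set.mem_union, Set.mem_insert_iff, Set.mem_singleton_iff,
    mem_tV_iff h]
  tauto

theorem eq6L (h : l < r)
    (hlab : (GadgetV.lab (l, (l + r) / 2) : GadgetV κ) ∈ tV l ((l + r) / 2) A) :
    tV (κ := κ) l r A \ {GadgetV.lab (l, r)} =
      ({GadgetV.mid (l, r), GadgetV.lab (l, (l + r) / 2)} : Set (GadgetV κ)) ∪
        ((tV l ((l + r) / 2) A \ {GadgetV.lab (l, (l + r) / 2)}) ∪ tV ((l + r) / 2 + 1) r A) := by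
  ext v
  have hm1 : v ∈ tV (κ := κ) l ((l+r)/2) A → v ≠ .lab (l, r) := fun h1 h2 => lab_root_not_mem_left h (h2 ▸ h1)
  have hm3 : v ∈ tV (κ := κ) ((l+r)/2+1) r A → v ≠ .lab (l, r) := fun h1 h2 => lab_root_not_mem_right h (h2 ▸ h1)
  have hI0 : v = GadgetV.lab (l, (l + r) / 2) → v ∈ tV (κ := κ) l ((l+r)/2) A := by
    rintro rfl; exact hlab
  have hI2 : v = GadgetV.lab (l, (l + r) / 2) → v ≠ .lab (l, r) := by
    rintro rfl h2
    injection h2 with h2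
    rw [Prod.ext_iff] at h2
    omega
  have hI4 : v = GadgetV.mid (l, r) → v ≠ .lab (l, r) := by
    rintro rfl h2
    exact absurd h2 (by simp)
  simp only [Set.mem_diff, Set.mem_union, Set.mem_insert_iff, Set.mem_singleton_iff,
    mem_tV_iff h]
  tauto

theorem eq5R (h : l < r) :
    (tV (κ := κ) l r A \ {GadgetV.lab (l, r)}) \
        {GadgetV.mid (l, r), GadgetV.lab ((l + r) / 2 + 1, r)} =
      tV l ((l + r) / 2) A ∪ (tV ((l + r) / 2 + 1) r A \ {GadgetV.lab ((l + r) / 2 + 1, r)}) := by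
  ext v
  have hm1 : v ∈ tV (κ := κ) l ((l+r)/2) A → v ≠ .lab (l, r) := fun h1 h2 => lab_root_not_mem_left h (h2 ▸ h1)
  have hm2 : v ∈ tV (κ := κ) l ((l+r)/2) A → v ≠ .mid (l, r) := fun h1 h2 => mid_root_not_mem_left h (h2 ▸ h1)
  have hm3 : v ∈ tV (κ := κ) ((l+r)/2+1) r A → v ≠ .lab (l, r) := fun h1 h2 => lab_root_not_mem_right h (h2 ▸ h1)
  have hm4 : v ∈ tV (κ := κ) ((l+r)/2+1) r A → v ≠ .mid (l, r) := fun h1 h2 => mid_root_not_mem_right h (h2 ▸ h1)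
  have hI1 : v = GadgetV.lab ((l + r) / 2 + 1, r) → v ∉ tV (κ := κ) l ((l+r)/2) A := by
    rintro rfl hmem
    have := mem_treeLabels_bounds (by omega : l ≤ (l+r)/2) hmem.1
    simp only at this
    omega
  simp only [Set.mem_diff, Set.mem_union, Set.mem_insert_iff, Set.mem_singleton_iff,
    mem_tV_iff h]
  tauto

theorem eq6R (h : l < r)
    (hlab : (GadgetV.lab ((l + r) / 2 + 1, r) : GadgetV κ) ∈ tV ((l + r) / 2 + 1) r A) :
    tV (κ := κ) l r A \ {GadgetV.lab (l, r)} =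
      ({GadgetV.mid (l, r), GadgetV.lab ((l + r) / 2 + 1, r)} : Set (GadgetV κ)) ∪
        (tV l ((l + r) / 2) A ∪
          (tV ((l + r) / 2 + 1) r A \ {GadgetV.lab ((l + r) / 2 + 1, r)})) := by
  ext v
  have hm1 : v ∈ tV (κ := κ) l ((l+r)/2) A → v ≠ .lab (l, r) := fun h1 h2 => lab_root_not_mem_left h (h2 ▸ h1)
  have hm3 : v ∈ tV (κ := κ) ((l+r)/2+1) r A → v ≠ .lab (l, r) := fun h1 h2 => lab_root_not_mem_right h (h2 ▸ h1)
  have hI0 : v = GadgetV.lab ((l + r) / 2 + 1, r) → v ∈ tV (κ := κ) ((l+r)/2+1) r A := by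
    rintro rfl; exact hlab
  have hI2 : v = GadgetV.lab ((l + r) / 2 + 1, r) → v ≠ .lab (l, r) := by
    rintro rfl h2
    injection h2 with h2
    rw [Prod.ext_iff] at h2
    omega
  have hI4 : v = GadgetV.mid (l, r) → v ≠ .lab (l, r) := by
    rintro rfl h2
    exact absurd h2 (by simp)
  simp only [Set.mem_diff, Set.mem_union, Set.mem_insert_iff, Set.mem_singleton_iff,
    mem_tV_iff h]
  tauto

end SetEq

/-! ### The main tree matching lemmas -/

section Tree
variable {l₀ r₀ κ : ℕ} {a : Fin κ → ℕ × ℕ}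

theorem f_lab_root {l r : ℕ} (h : l < r) {A : Finset ℕ} {s : Set (GadgetV κ)}
    (hs : s ⊆ tV l r A) {f : GadgetV κ → GadgetV κ}
    (hf : ∀ v ∈ s, f v ∈ s ∧ (gadgetGraph l₀ r₀ κ a).Adj v (f v) ∧ f (f v) = v)
    (hroot : GadgetV.lab (l, r) ∈ s) :
    f (GadgetV.lab (l, r)) = GadgetV.mid (l, r) := by
  obtain ⟨hm, hadj, -⟩ := hf _ hroot
  rcases adj_lab hadj with ⟨-, -, heq⟩ | ⟨p, -, hpint, hch, heq⟩ | ⟨i, -, heq⟩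
  · exact heq
  · have hmem := hs hm
    rw [heq] at hmem
    have hb := mem_treeLabels_bounds (by omega : l ≤ r) hmem.1
    rcases hch with hc | hc <;> (rw [Prod.ext_iff] at hc; simp only at hc; omega)
  · have hmem := hs hm
    rw [heq] at hmem
    exact absurd hmem not_mem_tV_switch

theorem treeG_aux : ∀ (n l r : ℕ), r - l = n → l ≤ r → treeLabels l r ⊆ treeLabels l₀ r₀ →
    ∀ A : Finset ℕ,
    (HasPM (gadgetGraph l₀ r₀ κ a) (tV l r A) ↔ ∀ x ∈ A, ¬(l ≤ x ∧ x ≤ r)) := by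
  intro n
  induction n using Nat.strong_induction_on with
  | _ n ih =>
  intro l r hn hlr hsub A
  by_cases h : l < r
  · have hmL : l ≤ (l+r)/2 := by omega
    have hmR : (l+r)/2+1 ≤ r := by omega
    have hsubL : treeLabels l ((l+r)/2) ⊆ treeLabels l₀ r₀ :=
      fun q hq => hsub (treeLabels_subset_left h hq)
    have hsubR : treeLabels ((l+r)/2+1) r ⊆ treeLabels l₀ r₀ :=
      fun q hq => hsub (treeLabels_subset_right h hq)
    have hroot : (l, r) ∈ treeLabels l₀ r₀ := hsub (root_mem_treeLabels hlr)
    have ihL := ih ((l+r)/2 - l) (by omega) l ((l+r)/2) rfl hmL hsubL A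
    have ihR := ih (r - ((l+r)/2+1)) (by omega) ((l+r)/2+1) r rfl hmR hsubR A
    have hdLR : Disjoint (tV (κ := κ) l ((l+r)/2) A) (tV ((l+r)/2+1) r A) :=
      tV_disjoint hmL hmR (by omega)
    constructor
    · rintro ⟨f, hf⟩
      have hfr : f (.lab (l, r)) = .mid (l, r) :=
        f_lab_root h Set.Subset.rfl hf (lab_root_mem_tV h)
      have hfm : f (.mid (l, r)) = .lab (l, r) := by
        have hinv := (hf _ (lab_root_mem_tV h)).2.2
        rw [hfr] at hinv
        exact hinv
      have hcl : ∀ v ∈ tV l r A,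
          v ∈ ({GadgetV.lab (l, r), GadgetV.mid (l, r)} : Set (GadgetV κ)) →
          f v ∈ ({GadgetV.lab (l, r), GadgetV.mid (l, r)} : Set (GadgetV κ)) := by
        rintro v - (rfl | rfl)
        · rw [hfr]; right; rfl
        · rw [hfm]; left; rfl
      have hf2 := matching_diff hf hcl
      rw [eq1 h] at hf2
      have hclR : ∀ v ∈ tV l ((l+r)/2) A ∪ tV ((l+r)/2+1) r A,
          v ∈ tV (κ := κ) ((l+r)/2+1) r A → f v ∈ tV ((l+r)/2+1) r A := by
        intro v hv hvR
        obtain ⟨hm, hadj, -⟩ := hf2 v hv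
        rcases hm with hmL' | hmR'
        · exact absurd hadj.symm (no_cross hmL hmR (by omega) hmL' hvR)
        · exact hmR'
      have hclL : ∀ v ∈ tV l ((l+r)/2) A ∪ tV ((l+r)/2+1) r A,
          v ∈ tV (κ := κ) l ((l+r)/2) A → f v ∈ tV l ((l+r)/2) A := by
        intro v hv hvL
        obtain ⟨hm, hadj, -⟩ := hf2 v hv
        rcases hm with hmL' | hmR'
        · exact hmL'
        · exact absurd hadj (no_cross hmL hmR (by omega) hvL hmR')
      have hL : HasPM (gadgetGraph l₀ r₀ κ a) (tV l ((l+r)/2) A) := by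
        have := matching_diff hf2 hclR
        rw [Set.union_diff_cancel_right (Set.disjoint_iff.mp hdLR)] at this
        exact ⟨f, this⟩
      have hR : HasPM (gadgetGraph l₀ r₀ κ a) (tV ((l+r)/2+1) r A) := by
        have := matching_diff hf2 hclL
        rw [Set.union_diff_cancel_left (Set.disjoint_iff.mp hdLR)] at this
        exact ⟨f, this⟩
      intro x hx hb
      rcases le_or_gt x ((l+r)/2) with hc | hc
      · exact ihL.mp hL x hx ⟨by omega, hc⟩
      · exact ihR.mp hR x hx ⟨by omega, by omega⟩
    · intro hA
      have h1 : HasPM (gadgetGraph l₀ r₀ κ a)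
          ({GadgetV.lab (l, r), GadgetV.mid (l, r)} : Set (GadgetV κ)) :=
        hasPM_pair (adj_lab_mid hroot h)
      have h2 := ihL.mpr (fun x hx hb => hA x hx ⟨hb.1, by omega⟩)
      have h3 := ihR.mpr (fun x hx hb => hA x hx ⟨by omega, hb.2⟩)
      have hd2 : Disjoint ({GadgetV.lab (l, r), GadgetV.mid (l, r)} : Set (GadgetV κ))
          (tV l ((l+r)/2) A ∪ tV ((l+r)/2+1) r A) := by
        rw [Set.disjoint_left]
        rintro v (rfl | rfl) (hv | hv)
        · exact lab_root_not_mem_left h hv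
        · exact lab_root_not_mem_right h hv
        · exact mid_root_not_mem_left h hv
        · exact mid_root_not_mem_right h hv
      rw [eq2 h]
      exact h1.union hd2 (h2.union hdLR h3)
  · have heq : l = r := by omega
    subst heq
    constructor
    · intro hpm x hx hb
      have hxl : x = l := by omega
      subst hxl
      rw [tV_leaf_of_mem hx] at hpm
      exact not_hasPM_singleton hpm
    · intro hA
      have : l ∉ A := fun hx => hA l hx ⟨le_refl _, le_refl _⟩
      rw [tV_leaf_of_not_mem this]
      exact hasPM_empty

end Tree

section TreeK
variable {l₀ r₀ κ : ℕ} {a : Fin κ → ℕ × ℕ}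

theorem adj_mid' {q1 q2 : ℕ} {v : GadgetV κ}
    (h : (gadgetGraph l₀ r₀ κ a).Adj (.mid (q1, q2)) v) :
    (q1, q2) ∈ treeLabels l₀ r₀ ∧ q1 < q2 ∧
      (v = .lab (q1, q2) ∨ v = .lab (q1, (q1 + q2) / 2) ∨ v = .lab ((q1 + q2) / 2 + 1, q2)) :=
  adj_mid h

theorem adj_mid_labL' {p1 p2 : ℕ} (hp : (p1, p2) ∈ treeLabels l₀ r₀) (h : p1 < p2) :
    (gadgetGraph l₀ r₀ κ a).Adj (.mid (p1, p2)) (.lab (p1, (p1 + p2) / 2)) :=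
  adj_mid_labL hp h

theorem adj_mid_labR' {p1 p2 : ℕ} (hp : (p1, p2) ∈ treeLabels l₀ r₀) (h : p1 < p2) :
    (gadgetGraph l₀ r₀ κ a).Adj (.mid (p1, p2)) (.lab ((p1 + p2) / 2 + 1, p2)) :=
  adj_mid_labR hp h

theorem treeK_aux : ∀ (n l r : ℕ), r - l = n → l ≤ r → treeLabels l r ⊆ treeLabels l₀ r₀ →
    ∀ (I1 I2 : ℕ), (I1, I2) ∈ treeLabels l r → ∀ A : Finset ℕ, (I1 = I2 → I1 ∈ A) →
    (HasPM (gadgetGraph l₀ r₀ κ a) (tV l r A \ {GadgetV.lab (I1, I2)}) ↔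
      ∃ x, I1 ≤ x ∧ x ≤ I2 ∧ x ∈ A ∧ ∀ y ∈ A, l ≤ y → y ≤ r → y = x) := by
  intro n
  induction n using Nat.strong_induction_on with
  | _ n ih =>
  intro l r hn hlr hsub I1 I2 hI A hleaf
  by_cases h : l < r
  case neg =>
    -- leaf interval
    have heq : l = r := by omega
    rw [heq] at hI
    have hIe : (I1, I2) = (r, r) := mem_treeLabels_leaf_iff.mp hI
    have hIe' : I1 = r ∧ I2 = r := by
      rw [Prod.mk.injEq] at hIe
      exact hIe
    have hA : I1 ∈ A := hleaf (by omega)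
    constructor
    · intro _
      exact ⟨I1, le_refl _, by omega, hA, fun y _ h1 h2 => by omega⟩
    · intro _
      rw [heq, hIe, tV_leaf_diff]
      exact hasPM_empty
  case pos =>
  have hmL : l ≤ (l+r)/2 := by omega
  have hmR : (l+r)/2+1 ≤ r := by omega
  have hsubL : treeLabels l ((l+r)/2) ⊆ treeLabels l₀ r₀ :=
    fun q hq => hsub (treeLabels_subset_left h hq)
  have hsubR : treeLabels ((l+r)/2+1) r ⊆ treeLabels l₀ r₀ :=
    fun q hq => hsub (treeLabels_subset_right h hq)
  have hroot : (l, r) ∈ treeLabels l₀ r₀ := hsub (root_mem_treeLabels hlr)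
  have hdLR : Disjoint (tV (κ := κ) l ((l+r)/2) A) (tV ((l+r)/2+1) r A) :=
    tV_disjoint hmL hmR (by omega)
  have hGR := treeG_aux (l₀ := l₀) (r₀ := r₀) (a := a) _ ((l+r)/2+1) r rfl hmR hsubR A
  have hGL := treeG_aux (l₀ := l₀) (r₀ := r₀) (a := a) _ l ((l+r)/2) rfl hmL hsubL A
  rw [treeLabels_of_lt h, Finset.mem_insert, Finset.mem_union] at hI
  rcases hI with hIe | hI | hI
  · -- I is the root.
    rw [Prod.mk.injEq] at hIe
    obtain ⟨rfl, rfl⟩ := hIe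
    constructor
    · rintro ⟨f, hf⟩
      have hmid : GadgetV.mid (I1, I2) ∈ tV (κ := κ) I1 I2 A \ {GadgetV.lab (I1, I2)} :=
        ⟨mid_root_mem_tV h, by simp⟩
      obtain ⟨hm, hadj, hinv⟩ := hf _ hmid
      rcases adj_mid' hadj with ⟨-, -, heq | heq | heq⟩
      · rw [heq] at hm
        exact absurd rfl hm.2
      · -- matched to the left child root
        rw [heq] at hm hinv
        have hlabL : GadgetV.lab (I1, (I1+I2)/2) ∈ tV (κ := κ) I1 ((I1+I2)/2) A :=
          ⟨root_mem_treeLabels hmL, hm.1.2⟩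
        have hcl : ∀ v ∈ tV I1 I2 A \ {GadgetV.lab (I1, I2)},
            v ∈ ({GadgetV.mid (I1, I2), GadgetV.lab (I1, (I1+I2)/2)} : Set (GadgetV κ)) →
            f v ∈ ({GadgetV.mid (I1, I2), GadgetV.lab (I1, (I1+I2)/2)} : Set (GadgetV κ)) := by
          rintro v - (rfl | rfl)
          · rw [heq]; right; rfl
          · rw [hinv]; left; rfl
        have hf2 := matching_diff hf hcl
        rw [eq5L h] at hf2
        have hKL : HasPM (gadgetGraph l₀ r₀ κ a)
            (tV I1 ((I1+I2)/2) A \ {GadgetV.lab (I1, (I1+I2)/2)}) := by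
          refine ⟨f, ?_⟩
          have hclR : ∀ v ∈ (tV I1 ((I1+I2)/2) A \ {GadgetV.lab (I1, (I1+I2)/2)}) ∪
              tV ((I1+I2)/2+1) I2 A,
              v ∈ tV (κ := κ) ((I1+I2)/2+1) I2 A → f v ∈ tV ((I1+I2)/2+1) I2 A := by
            intro v hv hvR
            obtain ⟨hm', hadj', -⟩ := hf2 v hv
            rcases hm' with hmL' | hmR'
            · exact absurd hadj'.symm (no_cross hmL hmR (by omega) hmL'.1 hvR)
            · exact hmR'
          have := matching_diff hf2 hclR
          rwa [Set.union_diff_cancel_right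
            (Set.disjoint_iff.mp (Set.disjoint_of_subset_left Set.diff_subset hdLR))] at this
        have hGR' : HasPM (gadgetGraph l₀ r₀ κ a) (tV ((I1+I2)/2+1) I2 A) := by
          refine ⟨f, ?_⟩
          have hclL : ∀ v ∈ (tV I1 ((I1+I2)/2) A \ {GadgetV.lab (I1, (I1+I2)/2)}) ∪
              tV ((I1+I2)/2+1) I2 A,
              v ∈ tV (κ := κ) I1 ((I1+I2)/2) A \ {GadgetV.lab (I1, (I1+I2)/2)} →
              f v ∈ tV I1 ((I1+I2)/2) A \ {GadgetV.lab (I1, (I1+I2)/2)} := by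
            intro v hv hvL
            obtain ⟨hm', hadj', -⟩ := hf2 v hv
            rcases hm' with hmL' | hmR'
            · exact hmL'
            · exact absurd hadj' (no_cross hmL hmR (by omega) hvL.1 hmR')
          have := matching_diff hf2 hclL
          rwa [Set.union_diff_cancel_left
            (Set.disjoint_iff.mp (Set.disjoint_of_subset_left Set.diff_subset hdLR))] at this
        obtain ⟨x, hx1, hx2, hx3, hx4⟩ :=
          (ih ((I1+I2)/2 - I1) (by omega) I1 ((I1+I2)/2) rfl hmL hsubL I1 ((I1+I2)/2)
            (root_mem_treeLabels hmL) A hlabL.2).mp hKL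
        have hRA := hGR.mp hGR'
        refine ⟨x, hx1, by omega, hx3, ?_⟩
        intro y hy h1 h2
        by_cases hc : y ≤ (I1+I2)/2
        · exact hx4 y hy h1 hc
        · exact absurd ⟨by omega, h2⟩ (hRA y hy)
      · -- matched to the right child root
        rw [heq] at hm hinv
        have hlabR : GadgetV.lab ((I1+I2)/2+1, I2) ∈ tV (κ := κ) ((I1+I2)/2+1) I2 A :=
          ⟨root_mem_treeLabels hmR, hm.1.2⟩
        have hcl : ∀ v ∈ tV I1 I2 A \ {GadgetV.lab (I1, I2)},
            v ∈ ({GadgetV.mid (I1, I2), GadgetV.lab ((I1+I2)/2+1, I2)} : Set (GadgetV κ)) →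
            f v ∈ ({GadgetV.mid (I1, I2), GadgetV.lab ((I1+I2)/2+1, I2)} : Set (GadgetV κ)) := by
          rintro v - (rfl | rfl)
          · rw [heq]; right; rfl
          · rw [hinv]; left; rfl
        have hf2 := matching_diff hf hcl
        rw [eq5R h] at hf2
        have hKR : HasPM (gadgetGraph l₀ r₀ κ a)
            (tV ((I1+I2)/2+1) I2 A \ {GadgetV.lab ((I1+I2)/2+1, I2)}) := by
          refine ⟨f, ?_⟩
          have hclL : ∀ v ∈ tV I1 ((I1+I2)/2) A ∪
              (tV ((I1+I2)/2+1) I2 A \ {GadgetV.lab ((I1+I2)/2+1, I2)}),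
              v ∈ tV (κ := κ) I1 ((I1+I2)/2) A → f v ∈ tV I1 ((I1+I2)/2) A := by
            intro v hv hvL
            obtain ⟨hm', hadj', -⟩ := hf2 v hv
            rcases hm' with hmL' | hmR'
            · exact hmL'
            · exact absurd hadj' (no_cross hmL hmR (by omega) hvL hmR'.1)
          have := matching_diff hf2 hclL
          rwa [Set.union_diff_cancel_left
            (Set.disjoint_iff.mp (Set.disjoint_of_subset_right Set.diff_subset hdLR))] at this
        have hGL' : HasPM (gadgetGraph l₀ r₀ κ a) (tV I1 ((I1+I2)/2) A) := by
          refine ⟨f, ?_⟩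
          have hclR : ∀ v ∈ tV I1 ((I1+I2)/2) A ∪
              (tV ((I1+I2)/2+1) I2 A \ {GadgetV.lab ((I1+I2)/2+1, I2)}),
              v ∈ tV (κ := κ) ((I1+I2)/2+1) I2 A \ {GadgetV.lab ((I1+I2)/2+1, I2)} →
              f v ∈ tV ((I1+I2)/2+1) I2 A \ {GadgetV.lab ((I1+I2)/2+1, I2)} := by
            intro v hv hvR
            obtain ⟨hm', hadj', -⟩ := hf2 v hv
            rcases hm' with hmL' | hmR'
            · exact absurd hadj'.symm (no_cross hmL hmR (by omega) hmL' hvR.1)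
            · exact hmR'
          have := matching_diff hf2 hclR
          rwa [Set.union_diff_cancel_right
            (Set.disjoint_iff.mp (Set.disjoint_of_subset_right Set.diff_subset hdLR))] at this
        obtain ⟨x, hx1, hx2, hx3, hx4⟩ :=
          (ih (I2 - ((I1+I2)/2+1)) (by omega) ((I1+I2)/2+1) I2 rfl hmR hsubR ((I1+I2)/2+1) I2
            (root_mem_treeLabels hmR) A hlabR.2).mp hKR
        have hLA := hGL.mp hGL'
        refine ⟨x, by omega, hx2, hx3, ?_⟩
        intro y hy h1 h2
        by_cases hc : (I1+I2)/2+1 ≤ y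
        · exact hx4 y hy hc h2
        · exact absurd ⟨h1, by omega⟩ (hLA y hy)
    · rintro ⟨x, hx1, hx2, hx3, hx4⟩
      by_cases hc : x ≤ (I1+I2)/2
      · -- keep the branch towards the left
        have hlabL : GadgetV.lab (I1, (I1+I2)/2) ∈ tV (κ := κ) I1 ((I1+I2)/2) A := by
          refine ⟨root_mem_treeLabels hmL, fun hlm => ?_⟩
          have : x = I1 := by omega
          rwa [this] at hx3
        have h1 : HasPM (gadgetGraph l₀ r₀ κ a)
            ({GadgetV.mid (I1, I2), GadgetV.lab (I1, (I1+I2)/2)} : Set (GadgetV κ)) :=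
          hasPM_pair (adj_mid_labL' hroot h)
        have h2 := (ih ((I1+I2)/2 - I1) (by omega) I1 ((I1+I2)/2) rfl hmL hsubL I1 ((I1+I2)/2)
            (root_mem_treeLabels hmL) A hlabL.2).mpr
          ⟨x, hx1, hc, hx3, fun y hy hy1 hy2 => hx4 y hy hy1 (by omega)⟩
        have h3 := hGR.mpr (by
          intro y hy hb
          have := hx4 y hy (by omega) hb.2
          omega)
        have hd2 : Disjoint
            ({GadgetV.mid (I1, I2), GadgetV.lab (I1, (I1+I2)/2)} : Set (GadgetV κ))
            ((tV I1 ((I1+I2)/2) A \ {GadgetV.lab (I1, (I1+I2)/2)}) ∪ tV ((I1+I2)/2+1) I2 A) := by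
          rw [Set.disjoint_left]
          rintro v (rfl | rfl) (hv | hv)
          · exact mid_root_not_mem_left h hv.1
          · exact mid_root_not_mem_right h hv
          · exact hv.2 rfl
          · have := mem_treeLabels_bounds hmR hv.1
            simp only at this
            omega
        rw [eq6L h hlabL]
        exact h1.union hd2 (HasPM.union
          (Set.disjoint_of_subset_left Set.diff_subset hdLR) h2 h3)
      · -- keep the branch towards the right
        have hlabR : GadgetV.lab ((I1+I2)/2+1, I2) ∈ tV (κ := κ) ((I1+I2)/2+1) I2 A := by
          refine ⟨root_mem_treeLabels hmR, fun hlm => ?_⟩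
          have : x = (I1+I2)/2+1 := by omega
          rwa [this] at hx3
        have h1 : HasPM (gadgetGraph l₀ r₀ κ a)
            ({GadgetV.mid (I1, I2), GadgetV.lab ((I1+I2)/2+1, I2)} : Set (GadgetV κ)) :=
          hasPM_pair (adj_mid_labR' hroot h)
        have h2 := (ih (I2 - ((I1+I2)/2+1)) (by omega) ((I1+I2)/2+1) I2 rfl hmR hsubR
            ((I1+I2)/2+1) I2 (root_mem_treeLabels hmR) A hlabR.2).mpr
          ⟨x, by omega, hx2, hx3, fun y hy hy1 hy2 => hx4 y hy (by omega) hy2⟩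
        have h3 := hGL.mpr (by
          intro y hy hb
          have := hx4 y hy hb.1 (by omega)
          omega)
        have hd2 : Disjoint
            ({GadgetV.mid (I1, I2), GadgetV.lab ((I1+I2)/2+1, I2)} : Set (GadgetV κ))
            (tV I1 ((I1+I2)/2) A ∪
              (tV ((I1+I2)/2+1) I2 A \ {GadgetV.lab ((I1+I2)/2+1, I2)})) := by
          rw [Set.disjoint_left]
          rintro v (rfl | rfl) (hv | hv)
          · exact mid_root_not_mem_left h hv
          · exact mid_root_not_mem_right h hv.1
          · have := mem_treeLabels_bounds hmL hv.1
            simp only at this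
            omega
          · exact hv.2 rfl
        rw [eq6R h hlabR]
        exact h1.union hd2 (HasPM.union
          (Set.disjoint_of_subset_right Set.diff_subset hdLR) h3 h2)
  · -- I in the left subtree
    have hIb := mem_treeLabels_bounds hmL hI
    simp only at hIb
    have hne : (GadgetV.lab (l, r) : GadgetV κ) ≠ GadgetV.lab (I1, I2) := by
      simp only [ne_eq, GadgetV.lab.injEq, Prod.mk.injEq]
      omega
    constructor
    · rintro ⟨f, hf⟩
      have hroot' : GadgetV.lab (l, r) ∈ tV l r A \ {GadgetV.lab (I1, I2)} :=
        ⟨lab_root_mem_tV h, hne⟩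
      have hfr : f (.lab (l, r)) = .mid (l, r) := f_lab_root h Set.diff_subset hf hroot'
      have hfm : f (.mid (l, r)) = .lab (l, r) := by
        have hinv := (hf _ hroot').2.2
        rw [hfr] at hinv
        exact hinv
      have hcl : ∀ v ∈ tV l r A \ {GadgetV.lab (I1, I2)},
          v ∈ ({GadgetV.lab (l, r), GadgetV.mid (l, r)} : Set (GadgetV κ)) →
          f v ∈ ({GadgetV.lab (l, r), GadgetV.mid (l, r)} : Set (GadgetV κ)) := by
        rintro v - (rfl | rfl)
        · rw [hfr]; right; rfl
        · rw [hfm]; left; rfl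
      have hf2 := matching_diff hf hcl
      rw [eq3L h hI] at hf2
      have hKL : HasPM (gadgetGraph l₀ r₀ κ a) (tV l ((l+r)/2) A \ {GadgetV.lab (I1, I2)}) := by
        refine ⟨f, ?_⟩
        have hclR : ∀ v ∈ (tV l ((l+r)/2) A \ {GadgetV.lab (I1, I2)}) ∪ tV ((l+r)/2+1) r A,
            v ∈ tV (κ := κ) ((l+r)/2+1) r A → f v ∈ tV ((l+r)/2+1) r A := by
          intro v hv hvR
          obtain ⟨hm', hadj', -⟩ := hf2 v hv
          rcases hm' with hmL' | hmR'
          · exact absurd hadj'.symm (no_cross hmL hmR (by omega) hmL'.1 hvR)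
          · exact hmR'
        have := matching_diff hf2 hclR
        rwa [Set.union_diff_cancel_right
          (Set.disjoint_iff.mp (Set.disjoint_of_subset_left Set.diff_subset hdLR))] at this
      have hGR' : HasPM (gadgetGraph l₀ r₀ κ a) (tV ((l+r)/2+1) r A) := by
        refine ⟨f, ?_⟩
        have hclL : ∀ v ∈ (tV l ((l+r)/2) A \ {GadgetV.lab (I1, I2)}) ∪ tV ((l+r)/2+1) r A,
            v ∈ tV (κ := κ) l ((l+r)/2) A \ {GadgetV.lab (I1, I2)} →
            f v ∈ tV l ((l+r)/2) A \ {GadgetV.lab (I1, I2)} := by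
          intro v hv hvL
          obtain ⟨hm', hadj', -⟩ := hf2 v hv
          rcases hm' with hmL' | hmR'
          · exact hmL'
          · exact absurd hadj' (no_cross hmL hmR (by omega) hvL.1 hmR')
        have := matching_diff hf2 hclL
        rwa [Set.union_diff_cancel_left
          (Set.disjoint_iff.mp (Set.disjoint_of_subset_left Set.diff_subset hdLR))] at this
      obtain ⟨x, hx1, hx2, hx3, hx4⟩ :=
        (ih ((l+r)/2 - l) (by omega) l ((l+r)/2) rfl hmL hsubL I1 I2 hI A hleaf).mp hKL
      have hRA := hGR.mp hGR'
      refine ⟨x, hx1, hx2, hx3, ?_⟩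
      intro y hy h1 h2
      by_cases hc : y ≤ (l+r)/2
      · exact hx4 y hy h1 hc
      · exact absurd ⟨by omega, h2⟩ (hRA y hy)
    · rintro ⟨x, hx1, hx2, hx3, hx4⟩
      have h1 : HasPM (gadgetGraph l₀ r₀ κ a)
          ({GadgetV.lab (l, r), GadgetV.mid (l, r)} : Set (GadgetV κ)) :=
        hasPM_pair (adj_lab_mid hroot h)
      have h2 := (ih ((l+r)/2 - l) (by omega) l ((l+r)/2) rfl hmL hsubL I1 I2 hI A hleaf).mpr
        ⟨x, hx1, hx2, hx3, fun y hy hy1 hy2 => hx4 y hy hy1 (by omega)⟩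
      have h3 := hGR.mpr (by
        intro y hy hb
        have := hx4 y hy (by omega) hb.2
        omega)
      have hd2 : Disjoint ({GadgetV.lab (l, r), GadgetV.mid (l, r)} : Set (GadgetV κ))
          ((tV l ((l+r)/2) A \ {GadgetV.lab (I1, I2)}) ∪ tV ((l+r)/2+1) r A) := by
        rw [Set.disjoint_left]
        rintro v (rfl | rfl) (hv | hv)
        · exact lab_root_not_mem_left h hv.1
        · exact lab_root_not_mem_right h hv
        · exact mid_root_not_mem_left h hv.1
        · exact mid_root_not_mem_right h hv
      rw [eq4L h hI]
      exact h1.union hd2 (HasPM.union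
        (Set.disjoint_of_subset_left Set.diff_subset hdLR) h2 h3)
  · -- I in the right subtree
    have hIb := mem_treeLabels_bounds hmR hI
    simp only at hIb
    have hne : (GadgetV.lab (l, r) : GadgetV κ) ≠ GadgetV.lab (I1, I2) := by
      simp only [ne_eq, GadgetV.lab.injEq, Prod.mk.injEq]
      omega
    constructor
    · rintro ⟨f, hf⟩
      have hroot' : GadgetV.lab (l, r) ∈ tV l r A \ {GadgetV.lab (I1, I2)} :=
        ⟨lab_root_mem_tV h, hne⟩
      have hfr : f (.lab (l, r)) = .mid (l, r) := f_lab_root h Set.diff_subset hf hroot'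
      have hfm : f (.mid (l, r)) = .lab (l, r) := by
        have hinv := (hf _ hroot').2.2
        rw [hfr] at hinv
        exact hinv
      have hcl : ∀ v ∈ tV l r A \ {GadgetV.lab (I1, I2)},
          v ∈ ({GadgetV.lab (l, r), GadgetV.mid (l, r)} : Set (GadgetV κ)) →
          f v ∈ ({GadgetV.lab (l, r), GadgetV.mid (l, r)} : Set (GadgetV κ)) := by
        rintro v - (rfl | rfl)
        · rw [hfr]; right; rfl
        · rw [hfm]; left; rfl
      have hf2 := matching_diff hf hcl
      rw [eq3R h hI] at hf2
      have hKR : HasPM (gadgetGraph l₀ r₀ κ a)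
          (tV ((l+r)/2+1) r A \ {GadgetV.lab (I1, I2)}) := by
        refine ⟨f, ?_⟩
        have hclL : ∀ v ∈ tV l ((l+r)/2) A ∪ (tV ((l+r)/2+1) r A \ {GadgetV.lab (I1, I2)}),
            v ∈ tV (κ := κ) l ((l+r)/2) A → f v ∈ tV l ((l+r)/2) A := by
          intro v hv hvL
          obtain ⟨hm', hadj', -⟩ := hf2 v hv
          rcases hm' with hmL' | hmR'
          · exact hmL'
          · exact absurd hadj' (no_cross hmL hmR (by omega) hvL hmR'.1)
        have := matching_diff hf2 hclL
        rwa [Set.union_diff_cancel_left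
          (Set.disjoint_iff.mp (Set.disjoint_of_subset_right Set.diff_subset hdLR))] at this
      have hGL' : HasPM (gadgetGraph l₀ r₀ κ a) (tV l ((l+r)/2) A) := by
        refine ⟨f, ?_⟩
        have hclR : ∀ v ∈ tV l ((l+r)/2) A ∪ (tV ((l+r)/2+1) r A \ {GadgetV.lab (I1, I2)}),
            v ∈ tV (κ := κ) ((l+r)/2+1) r A \ {GadgetV.lab (I1, I2)} →
            f v ∈ tV ((l+r)/2+1) r A \ {GadgetV.lab (I1, I2)} := by
          intro v hv hvR
          obtain ⟨hm', hadj', -⟩ := hf2 v hv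
          rcases hm' with hmL' | hmR'
          · exact absurd hadj'.symm (no_cross hmL hmR (by omega) hmL' hvR.1)
          · exact hmR'
        have := matching_diff hf2 hclR
        rwa [Set.union_diff_cancel_right
          (Set.disjoint_iff.mp (Set.disjoint_of_subset_right Set.diff_subset hdLR))] at this
      obtain ⟨x, hx1, hx2, hx3, hx4⟩ :=
        (ih (r - ((l+r)/2+1)) (by omega) ((l+r)/2+1) r rfl hmR hsubR I1 I2 hI A hleaf).mp hKR
      have hLA := hGL.mp hGL'
      refine ⟨x, hx1, hx2, hx3, ?_⟩
      intro y hy h1 h2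
      by_cases hc : (l+r)/2+1 ≤ y
      · exact hx4 y hy hc h2
      · exact absurd ⟨h1, by omega⟩ (hLA y hy)
    · rintro ⟨x, hx1, hx2, hx3, hx4⟩
      have h1 : HasPM (gadgetGraph l₀ r₀ κ a)
          ({GadgetV.lab (l, r), GadgetV.mid (l, r)} : Set (GadgetV κ)) :=
        hasPM_pair (adj_lab_mid hroot h)
      have h2 := (ih (r - ((l+r)/2+1)) (by omega) ((l+r)/2+1) r rfl hmR hsubR I1 I2 hI A
          hleaf).mpr
        ⟨x, hx1, hx2, hx3, fun y hy hy1 hy2 => hx4 y hy (by omega) hy2⟩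
      have h3 := hGL.mpr (by
        intro y hy hb
        have := hx4 y hy hb.1 (by omega)
        omega)
      have hd2 : Disjoint ({GadgetV.lab (l, r), GadgetV.mid (l, r)} : Set (GadgetV κ))
          (tV l ((l+r)/2) A ∪ (tV ((l+r)/2+1) r A \ {GadgetV.lab (I1, I2)})) := by
        rw [Set.disjoint_left]
        rintro v (rfl | rfl) (hv | hv)
        · exact lab_root_not_mem_left h hv
        · exact lab_root_not_mem_right h hv.1
        · exact mid_root_not_mem_left h hv
        · exact mid_root_not_mem_right h hv.1
      rw [eq4R h hI]
      exact h1.union hd2 (HasPM.union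
        (Set.disjoint_of_subset_right Set.diff_subset hdLR) h3 h2)

end TreeK

/-! ### Top-level assembly -/

section Top
variable {κ : ℕ}

theorem mem_active_lab {l r : ℕ} {S : Finset ℕ} {p : ℕ × ℕ} :
    (GadgetV.lab p : GadgetV κ) ∈ gadgetActive l r S ↔
      p ∈ treeLabels l r ∧ ¬(p.1 = p.2 ∧ p.1 ∈ S) := Iff.rfl

theorem mem_active_mid {l r : ℕ} {S : Finset ℕ} {p : ℕ × ℕ} :
    (GadgetV.mid p : GadgetV κ) ∈ gadgetActive l r S ↔
      p ∈ treeLabels l r ∧ p.1 < p.2 := Iff.rfl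

theorem mem_active_switch {l r : ℕ} {S : Finset ℕ} {i : Fin κ} :
    (GadgetV.switch i : GadgetV κ) ∈ gadgetActive l r S := trivial

theorem active_eq {l r : ℕ} (hlr : l ≤ r) (S : Finset ℕ) :
    gadgetActive l r (k := κ) S =
      tV l r (Finset.Icc l r \ S) ∪ {v | ∃ i, v = GadgetV.switch i} := by
  ext v
  cases v with
  | lab p =>
    simp only [mem_active_lab, Set.mem_union, mem_tV_lab, Set.mem_setOf_eq]
    constructor
    · rintro ⟨hp, hns⟩
      have hb := mem_treeLabels_bounds hlr hp
      refine Or.inl ⟨hp, fun hleaf => ?_⟩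
      rw [Finset.mem_sdiff, Finset.mem_Icc]
      exact ⟨⟨hb.1, by omega⟩, fun hs => hns ⟨hleaf, hs⟩⟩
    · rintro (⟨hp, hcond⟩ | ⟨i, hi⟩)
      · refine ⟨hp, fun ⟨hleaf, hs⟩ => ?_⟩
        have := hcond hleaf
        rw [Finset.mem_sdiff] at this
        exact this.2 hs
      · exact absurd hi (by simp)
  | mid p =>
    simp only [mem_active_mid, Set.mem_union, mem_tV_mid, Set.mem_setOf_eq]
    constructor
    · exact fun h' => Or.inl h'
    · rintro (h' | ⟨i, hi⟩)
      · exact h'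
      · exact absurd hi (by simp)
  | switch i =>
    simp only [Set.mem_union, Set.mem_setOf_eq]
    constructor
    · intro _; exact Or.inr ⟨i, rfl⟩
    · intro _; exact mem_active_switch

theorem hasPM_pairs {l₀ r₀ : ℕ} {a : Fin κ → ℕ × ℕ} (hinj : Function.Injective a) :
    HasPM (gadgetGraph l₀ r₀ κ a)
      {v : GadgetV κ | (∃ i, v = GadgetV.switch i) ∨ (∃ i, v = GadgetV.lab (a i))} := by
  classical
  refine ⟨fun v => match v with
    | .switch i => .lab (a i)
    | .lab p => if h : ∃ i, a i = p then .switch h.choose else .lab p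
    | .mid p => .mid p, ?_⟩
  rintro v (⟨i, rfl⟩ | ⟨i, rfl⟩)
  · refine ⟨Or.inr ⟨i, rfl⟩, adj_switch_lab i, ?_⟩
    show (if h : ∃ j, a j = a i then GadgetV.switch h.choose else GadgetV.lab (a i)) =
      GadgetV.switch i
    have hch : ∃ j, a j = a i := ⟨i, rfl⟩
    rw [dif_pos hch]
    exact congrArg _ (hinj hch.choose_spec)
  · have hch : ∃ j, a j = a i := ⟨i, rfl⟩
    have hc : hch.choose = i := hinj hch.choose_spec
    have hred : (if h : ∃ j, a j = a i then GadgetV.switch h.choose else GadgetV.lab (a i)) =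
        GadgetV.switch i := by
      rw [dif_pos hch]
      exact congrArg _ hc
    refine ⟨?_, ?_, ?_⟩
    · show ((if h : ∃ j, a j = a i then GadgetV.switch h.choose else GadgetV.lab (a i)) ∈ _)
      rw [hred]
      exact Or.inl ⟨i, rfl⟩
    · show (gadgetGraph l₀ r₀ κ a).Adj _
        (if h : ∃ j, a j = a i then GadgetV.switch h.choose else GadgetV.lab (a i))
      rw [hred]
      exact (adj_switch_lab i).symm
    · show (match (if h : ∃ j, a j = a i then GadgetV.switch h.choose else GadgetV.lab (a i)) with
        | GadgetV.switch i => GadgetV.lab (a i)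
        | GadgetV.lab p => if h : ∃ i, a i = p then GadgetV.switch h.choose else GadgetV.lab p
        | GadgetV.mid p => GadgetV.mid p) = GadgetV.lab (a i)
      rw [hred]

end Top

/-! ### The main theorem -/

theorem gadget_pm_iff_aux {l r k : ℕ} (hlr : l ≤ r)
    (is : Fin k → ℕ) (his : ∀ j, is j ∈ Finset.Icc l r)
    (I : ℕ × ℕ) (hI : I ∈ treeLabels l r)
    (S : Finset ℕ) (hS : S ⊆ Finset.Icc l r) :
    (HasPM (gadgetGraph l r (k + 1) (Fin.snoc (fun j => (is j, is j)) I))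
        (tV l r (Finset.Icc l r \ S) ∪ {v | ∃ i, v = GadgetV.switch i})) ↔
      ∃ i' ∈ Finset.Icc I.1 I.2, Function.Injective is ∧ (∀ j, is j ≠ i') ∧
        S = Finset.Icc l r \ insert i' (Finset.image is Finset.univ) := by
  classical
  set a : Fin (k + 1) → ℕ × ℕ := Fin.snoc (fun j => (is j, is j)) I with ha
  have haC : ∀ j : Fin k, a j.castSucc = (is j, is j) := fun j => Fin.snoc_castSucc _ _ _
  have haL : a (Fin.last k) = I := Fin.snoc_last _ _
  set A : Finset ℕ := Finset.Icc l r \ S with hAdef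
  set A' : Finset ℕ := A \ Finset.image is Finset.univ with hA'def
  have hIb := mem_treeLabels_bounds hlr hI
  have hII : (I.1, I.2) ∈ treeLabels l r := hI
  have hisIcc : ∀ j, l ≤ is j ∧ is j ≤ r := by
    intro j
    have := his j
    rw [Finset.mem_Icc] at this
    exact this
  have hKey := treeK_aux (l₀ := l) (r₀ := r) (a := a) (r - l) l r rfl hlr subset_rfl
    I.1 I.2 hII A'
  constructor
  · rintro ⟨f, hf⟩
    have hswU : ∀ i : Fin (k+1),
        GadgetV.switch i ∈ tV l r A ∪ {v : GadgetV (k+1) | ∃ i, v = GadgetV.switch i} :=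
      fun i => Or.inr ⟨i, rfl⟩
    have hstep1 : ∀ i, f (.switch i) = .lab (a i) := fun i => adj_switch (hf _ (hswU i)).2.1
    have hmem : ∀ i, (GadgetV.lab (a i) : GadgetV (k+1)) ∈ tV l r A := by
      intro i
      have h1 := (hf _ (hswU i)).1
      rw [hstep1 i] at h1
      rcases h1 with h1 | ⟨j, hj⟩
      · exact h1
      · exact absurd hj (by simp)
    have hstep2 : ∀ i, f (.lab (a i)) = .switch i := by
      intro i
      have h2 := (hf _ (hswU i)).2.2
      rw [hstep1 i] at h2
      exact h2
    have hainj : Function.Injective a := by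
      intro i j hij
      have h3 : (GadgetV.switch i : GadgetV (k+1)) = .switch j := by
        rw [← hstep2 i, hij, hstep2 j]
      injection h3
    have hisA : ∀ j : Fin k, is j ∈ A := by
      intro j
      have h' := (hmem j.castSucc).2
      rw [haC j] at h'
      exact h' rfl
    have hT : ∀ v ∈ tV l r A ∪ {v : GadgetV (k+1) | ∃ i, v = GadgetV.switch i},
        v ∈ {v : GadgetV (k+1) | (∃ i, v = GadgetV.switch i) ∨ (∃ i, v = GadgetV.lab (a i))} →
        f v ∈ {v : GadgetV (k+1) |
          (∃ i, v = GadgetV.switch i) ∨ (∃ i, v = GadgetV.lab (a i))} := by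
      rintro v - (⟨i, rfl⟩ | ⟨i, rfl⟩)
      · rw [hstep1 i]; exact Or.inr ⟨i, rfl⟩
      · rw [hstep2 i]; exact Or.inl ⟨i, rfl⟩
    have hdiff := matching_diff hf hT
    have hseteq : (tV l r A ∪ {v : GadgetV (k+1) | ∃ i, v = GadgetV.switch i}) \
        {v : GadgetV (k+1) | (∃ i, v = GadgetV.switch i) ∨ (∃ i, v = GadgetV.lab (a i))} =
        tV (κ := k+1) l r A' \ {GadgetV.lab (I.1, I.2)} := by
      ext v
      cases v with
      | switch i =>
        constructor
        · rintro ⟨-, hnp⟩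
          exact absurd (Or.inl ⟨i, rfl⟩) hnp
        · rintro ⟨hv, -⟩
          exact absurd hv not_mem_tV_switch
      | mid p =>
        constructor
        · rintro ⟨hv | ⟨i, hi⟩, -⟩
          · exact ⟨⟨hv.1, hv.2⟩, by simp⟩
          · exact absurd hi (by simp)
        · rintro ⟨hv, -⟩
          refine ⟨Or.inl ⟨hv.1, hv.2⟩, ?_⟩
          rintro (⟨i, h'⟩ | ⟨i, h'⟩) <;> exact absurd h' (by simp)
      | lab p =>
        constructor
        · rintro ⟨hv | ⟨i, hi⟩, hnp⟩
          · have hnpa : ∀ i : Fin (k+1), p ≠ a i := fun i hpa => hnp (Or.inr ⟨i, by rw [hpa]⟩)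
            refine ⟨⟨hv.1, fun hleaf => ?_⟩, ?_⟩
            · have hpA := hv.2 hleaf
              rw [hA'def, Finset.mem_sdiff]
              refine ⟨hpA, fun himg => ?_⟩
              rw [Finset.mem_image] at himg
              obtain ⟨j, -, hj⟩ := himg
              refine hnpa j.castSucc ?_
              rw [haC j, Prod.ext_iff]
              exact ⟨hj.symm, by omega⟩
            · simp only [Set.mem_singleton_iff, GadgetV.lab.injEq]
              intro hpe
              exact hnpa (Fin.last k) (by rw [haL]; exact hpe)
          · exact absurd hi (by simp)
        · rintro ⟨⟨hp, hcond⟩, hnI⟩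
          refine ⟨Or.inl ⟨hp, fun hleaf => ?_⟩, ?_⟩
          · have h' := hcond hleaf
            rw [hA'def, Finset.mem_sdiff] at h'
            exact h'.1
          · rintro (⟨i, hi⟩ | ⟨i, hi⟩)
            · exact absurd hi (by simp)
            · injection hi with hi
              rcases Fin.eq_castSucc_or_eq_last i with ⟨j, rfl⟩ | rfl
              · rw [haC j] at hi
                have hleaf : p.1 = p.2 := by rw [hi]
                have h' := hcond hleaf
                rw [hA'def, Finset.mem_sdiff] at h'
                refine h'.2 ?_
                rw [Finset.mem_image]
                exact ⟨j, Finset.mem_univ j, by rw [hi]⟩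
              · rw [haL] at hi
                refine hnI ?_
                simp only [Set.mem_singleton_iff, GadgetV.lab.injEq]
                rw [hi]
    rw [hseteq] at hdiff
    have hleaf' : I.1 = I.2 → I.1 ∈ A' := by
      intro hle
      have h1 : I.1 ∈ A := by
        have h' := (hmem (Fin.last k)).2
        rw [haL] at h'
        exact h' hle
      rw [hA'def, Finset.mem_sdiff]
      refine ⟨h1, fun himg => ?_⟩
      rw [Finset.mem_image] at himg
      obtain ⟨j, -, hj⟩ := himg
      have he : a j.castSucc = a (Fin.last k) := by
        rw [haC j, haL, Prod.ext_iff]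
        exact ⟨hj, by omega⟩
      exact absurd (hainj he) (Fin.castSucc_lt_last j).ne
    obtain ⟨x, hx1, hx2, hx3, hx4⟩ := (hKey hleaf').mp ⟨f, hdiff⟩
    have hxA : x ∈ A := (Finset.mem_sdiff.mp (hA'def ▸ hx3)).1
    refine ⟨x, Finset.mem_Icc.mpr ⟨hx1, hx2⟩, ?_, ?_, ?_⟩
    · intro i j hij
      have he : a i.castSucc = a j.castSucc := by rw [haC, haC, hij]
      exact Fin.castSucc_injective _ (hainj he)
    · intro j hj
      rw [hA'def, Finset.mem_sdiff] at hx3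
      refine hx3.2 ?_
      rw [Finset.mem_image]
      exact ⟨j, Finset.mem_univ j, hj⟩
    · have hAeq : A = insert x (Finset.image is Finset.univ) := by
        ext y
        simp only [Finset.mem_insert, Finset.mem_image, Finset.mem_univ, true_and]
        constructor
        · intro hy
          by_cases hyi : ∃ j, is j = y
          · exact Or.inr hyi
          · left
            have hyIcc : y ∈ Finset.Icc l r := by
              rw [hAdef, Finset.mem_sdiff] at hy
              exact hy.1
            rw [Finset.mem_Icc] at hyIcc
            have hyA' : y ∈ A' := by
              rw [hA'def, Finset.mem_sdiff]
              refine ⟨hy, fun himg => ?_⟩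
              rw [Finset.mem_image] at himg
              obtain ⟨j, -, hj⟩ := himg
              exact hyi ⟨j, hj⟩
            exact (hx4 y hyA' hyIcc.1 hyIcc.2)
        · rintro (rfl | ⟨j, rfl⟩)
          · exact hxA
          · exact hisA j
      rw [← hAeq, hAdef]
      exact (sdiff_sdiff_eq_self hS).symm
  · rintro ⟨x, hxI, hinj, hne, hSeq⟩
    rw [Finset.mem_Icc] at hxI
    have hxIcc : l ≤ x ∧ x ≤ r := ⟨by omega, by omega⟩
    have hAeq : A = insert x (Finset.image is Finset.univ) := by
      have hsub2 : insert x (Finset.image is Finset.univ) ⊆ Finset.Icc l r := by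
        rw [Finset.insert_subset_iff]
        constructor
        · rw [Finset.mem_Icc]; exact hxIcc
        · intro y hy
          rw [Finset.mem_image] at hy
          obtain ⟨j, -, rfl⟩ := hy
          exact his j
      rw [hAdef, hSeq, sdiff_sdiff_eq_self hsub2]
    have hA'eq : A' = {x} := by
      rw [hA'def, hAeq]
      ext y
      simp only [Finset.mem_sdiff, Finset.mem_insert, Finset.mem_image, Finset.mem_univ,
        true_and, Finset.mem_singleton]
      constructor
      · rintro ⟨rfl | ⟨j, rfl⟩, hnimg⟩
        · rfl
        · exact absurd ⟨j, rfl⟩ hnimg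
      · rintro rfl
        exact ⟨Or.inl rfl, fun ⟨j, hj⟩ => hne j hj⟩
    have haInj : Function.Injective a := by
      intro i j hij
      rcases Fin.eq_castSucc_or_eq_last i with ⟨i', rfl⟩ | rfl <;>
        rcases Fin.eq_castSucc_or_eq_last j with ⟨j', rfl⟩ | rfl
      · rw [haC, haC, Prod.ext_iff] at hij
        exact congrArg Fin.castSucc (hinj hij.1)
      · exfalso
        rw [haC, haL, Prod.ext_iff] at hij
        exact hne i' (by omega)
      · exfalso
        rw [haC, haL, Prod.ext_iff] at hij
        exact hne j' (by omega)
      · rfl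
    have hleaf' : I.1 = I.2 → I.1 ∈ A' := by
      intro hle
      rw [hA'eq, Finset.mem_singleton]
      omega
    have hpart1 : HasPM (gadgetGraph l r (k+1) a)
        (tV l r A' \ {GadgetV.lab (I.1, I.2)}) :=
      (hKey hleaf').mpr ⟨x, hxI.1, hxI.2, by rw [hA'eq]; exact Finset.mem_singleton_self x,
        fun y hy _ _ => by rw [hA'eq, Finset.mem_singleton] at hy; exact hy⟩
    have hpart2 := hasPM_pairs (l₀ := l) (r₀ := r) haInj
    have hdisj : Disjoint (tV (κ := k+1) l r A' \ {GadgetV.lab (I.1, I.2)})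
        {v : GadgetV (k+1) | (∃ i, v = GadgetV.switch i) ∨ (∃ i, v = GadgetV.lab (a i))} := by
      rw [Set.disjoint_left]
      rintro v ⟨hv, hvI⟩ (⟨i, rfl⟩ | ⟨i, rfl⟩)
      · exact not_mem_tV_switch hv
      · rcases Fin.eq_castSucc_or_eq_last i with ⟨j, rfl⟩ | rfl
        · rw [haC j] at hv
          have := hv.2 rfl
          rw [hA'eq, Finset.mem_singleton] at this
          exact hne j this
        · rw [haL] at hvI
          exact hvI rfl
    have hun := HasPM.union hdisj hpart1 hpart2
    have hfinal : tV l r A ∪ {v : GadgetV (k+1) | ∃ i, v = GadgetV.switch i} =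
        (tV (κ := k+1) l r A' \ {GadgetV.lab (I.1, I.2)}) ∪
        {v : GadgetV (k+1) | (∃ i, v = GadgetV.switch i) ∨ (∃ i, v = GadgetV.lab (a i))} := by
      ext v
      cases v with
      | switch i =>
        constructor
        · intro _; exact Or.inr (Or.inl ⟨i, rfl⟩)
        · intro _; exact Or.inr ⟨i, rfl⟩
      | mid p =>
        constructor
        · rintro (hv | ⟨i, hi⟩)
          · exact Or.inl ⟨⟨hv.1, hv.2⟩, by simp⟩
          · exact absurd hi (by simp)
        · rintro (⟨hv, -⟩ | (⟨i, hi⟩ | ⟨i, hi⟩))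
          · exact Or.inl ⟨hv.1, hv.2⟩
          · exact absurd hi (by simp)
          · exact absurd hi (by simp)
      | lab p =>
        constructor
        · rintro (⟨hp, hcond⟩ | ⟨i, hi⟩)
          · by_cases hex : ∃ i, a i = p
            · obtain ⟨i, hi⟩ := hex
              exact Or.inr (Or.inr ⟨i, by rw [hi]⟩)
            · refine Or.inl ⟨⟨hp, fun hleaf => ?_⟩, ?_⟩
              · have hpA := hcond hleaf
                rw [hA'def, Finset.mem_sdiff]
                refine ⟨hpA, fun himg => ?_⟩
                rw [Finset.mem_image] at himg
                obtain ⟨j, -, hj⟩ := himg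
                refine hex ⟨j.castSucc, ?_⟩
                rw [haC j, Prod.ext_iff]
                exact ⟨hj, by omega⟩
              · simp only [Set.mem_singleton_iff, GadgetV.lab.injEq]
                intro hpe
                exact hex ⟨Fin.last k, by rw [haL, hpe]⟩
          · exact absurd hi (by simp)
        · rintro (⟨⟨hp, hcond⟩, -⟩ | (⟨i, hi⟩ | ⟨i, hi⟩))
          · refine Or.inl ⟨hp, fun hleaf => ?_⟩
            have h' := hcond hleaf
            rw [hA'def, Finset.mem_sdiff] at h'
            exact h'.1
          · exact absurd hi (by simp)
          · injection hi with hi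
            rcases Fin.eq_castSucc_or_eq_last i with ⟨j, rfl⟩ | rfl
            · rw [haC j] at hi
              refine Or.inl ⟨?_, fun _ => ?_⟩
              · rw [hi]
                exact leaf_mem_treeLabels (hisIcc j).1 (hisIcc j).2
              · rw [hi]
                show is j ∈ A
                rw [hAeq]
                exact Finset.mem_insert_of_mem (Finset.mem_image_of_mem is (Finset.mem_univ j))
            · rw [haL] at hi
              refine Or.inl ⟨by rw [hi]; exact hI, fun hleaf => ?_⟩
              have hle : I.1 = I.2 := by
                rw [hi] at hleaf
                exact hleaf
              have hx : p.1 = x := by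
                rw [hi]
                omega
              rw [hx, hAeq]
              exact Finset.mem_insert_self x _
    rw [hfinal]
    exact hun

/-- `T_{l,r}^{{i_1},…,{i_{k}},I}(−S)`, the tree with switch vertices pendant on the
leaves labeled `{is 0},…,{is (k-1)}` and on the vertex labeled by the interval
`I = (I.1, I.2) ∈ L_{l,r}`, with the leaves labeled by elements of `S` deleted, has a
perfect matching iff `S = {l,…,r} \ {is 0,…,is (k-1), i'}` for some `i' ∈ I` such that
`is 0, …, is (k-1), i'` are pairwise distinct. -/
theorem gadget_internalSwitch_perfectMatching_iff {l r k : ℕ} (hlr : l ≤ r)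
    (is : Fin k → ℕ) (his : ∀ j, is j ∈ Finset.Icc l r)
    (I : ℕ × ℕ) (hI : I ∈ treeLabels l r)
    (S : Finset ℕ) (hS : S ⊆ Finset.Icc l r) :
    (∃ M : ((gadgetGraph l r (k + 1)
          (Fin.snoc (fun j => (is j, is j)) I)).induce
        (gadgetActive l r S)).Subgraph, M.IsPerfectMatching) ↔
      ∃ i' ∈ Finset.Icc I.1 I.2, Function.Injective is ∧ (∀ j, is j ≠ i') ∧
        S = Finset.Icc l r \ insert i' (Finset.image is Finset.univ) := by
  rw [hasPM_iff_exists_pm, active_eq hlr S]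
  exact gadget_pm_iff_aux hlr is his I hI S hS
end
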